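/- arXiv:2009.05115 — 8 statements merged into one kernel-verified Lean document; each statement's English description precedes it below -/
import Mathlib

section
/- Let W be a linear subspace of a real vector space V, let C ⊆ V be a convex cone, and let W_C := (W + C) ∩ (W − C). If L: W → ℝ is a linear functional with L(w) ≥ 0 for all w ∈ W ∩ C, then L admits a linear extension L̄: W_C → ℝ such that L̄(v) ≥ 0 for all v ∈ W_C ∩ C. -/
/-- Choquet's extension lemma: Let `W` be a subspace of a real vector
space `V`, `C` a convex cone, and `W_C = (W+C) ∩ (W−C)`. Any linear functional on `W`
nonnegative on `W ∩ C` extends to a linear functional on `W_C` nonnegative on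
`W_C ∩ C`. -/
theorem choquet_extension
    {V : Type*} [AddCommGroup V] [Module ℝ V]
    (W : Submodule ℝ V) (C : Set V)
    (hC_add : ∀ x ∈ C, ∀ y ∈ C, x + y ∈ C)
    (hC_smul : ∀ (r : ℝ), 0 ≤ r → ∀ x ∈ C, r • x ∈ C)
    (L : W →ₗ[ℝ] ℝ)
    (hL : ∀ w : W, (w : V) ∈ C → 0 ≤ L w) :
    ∃ Lbar : V → ℝ,
      (∀ x ∈ ({v : V | (∃ w ∈ W, ∃ c ∈ C, v = w + c) ∧ (∃ w ∈ W, ∃ c ∈ C, v = w - c)}),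
        ∀ y ∈ ({v : V | (∃ w ∈ W, ∃ c ∈ C, v = w + c) ∧ (∃ w ∈ W, ∃ c ∈ C, v = w - c)}),
          Lbar (x + y) = Lbar x + Lbar y) ∧
      (∀ (r : ℝ), ∀ x ∈ ({v : V | (∃ w ∈ W, ∃ c ∈ C, v = w + c) ∧
          (∃ w ∈ W, ∃ c ∈ C, v = w - c)}),
          Lbar (r • x) = r * Lbar x) ∧
      (∀ w : W, Lbar (w : V) = L w) ∧
      (∀ v ∈ ({v : V | (∃ w ∈ W, ∃ c ∈ C, v = w + c) ∧ (∃ w ∈ W, ∃ c ∈ C, v = w - c)}),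
          v ∈ C → 0 ≤ Lbar v) := by
  by_cases hCne : C.Nonempty
  · obtain ⟨c₀, hc₀⟩ := hCne
    have h0 : (0 : V) ∈ C := by simpa using hC_smul 0 le_rfl c₀ hc₀
    -- the set Wc
    set Wc : Set V :=
      {v : V | (∃ w ∈ W, ∃ c ∈ C, v = w + c) ∧ (∃ w ∈ W, ∃ c ∈ C, v = w - c)} with hWc
    have hneg : ∀ v ∈ Wc, -v ∈ Wc := by
      rintro v ⟨⟨w1, hw1, c1, hc1, rfl'⟩, ⟨w2, hw2, c2, hc2, h2⟩⟩
      constructor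
      · exact ⟨-w2, neg_mem hw2, c2, hc2, by rw [h2]; abel⟩
      · exact ⟨-w1, neg_mem hw1, c1, hc1, by rw [rfl']; abel⟩
    have hadd : ∀ v ∈ Wc, ∀ u ∈ Wc, v + u ∈ Wc := by
      rintro v ⟨⟨w1, hw1, c1, hc1, rfl'⟩, ⟨w2, hw2, c2, hc2, h2⟩⟩
        u ⟨⟨w3, hw3, c3, hc3, rfl''⟩, ⟨w4, hw4, c4, hc4, h4⟩⟩
      constructor
      · exact ⟨w1 + w3, add_mem hw1 hw3, c1 + c3, hC_add _ hc1 _ hc3,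
          by rw [rfl', rfl'']; abel⟩
      · exact ⟨w2 + w4, add_mem hw2 hw4, c2 + c4, hC_add _ hc2 _ hc4,
          by rw [h2, h4]; abel⟩
    have hsmul : ∀ (r : ℝ), ∀ v ∈ Wc, r • v ∈ Wc := by
      have hpos : ∀ (r : ℝ), 0 ≤ r → ∀ v ∈ Wc, r • v ∈ Wc := by
        rintro r hr v ⟨⟨w1, hw1, c1, hc1, rfl'⟩, ⟨w2, hw2, c2, hc2, h2⟩⟩
        constructor
        · exact ⟨r • w1, Submodule.smul_mem _ _ hw1, r • c1, hC_smul r hr _ hc1,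
            by rw [rfl', smul_add]⟩
        · exact ⟨r • w2, Submodule.smul_mem _ _ hw2, r • c2, hC_smul r hr _ hc2,
            by rw [h2, smul_sub]⟩
      intro r v hv
      rcases le_or_gt 0 r with h | h
      · exact hpos r h v hv
      · have := hpos (-r) (by linarith) _ (hneg v hv)
        simpa using this
    have hWsub : ∀ w ∈ W, w ∈ Wc := fun w hw =>
      ⟨⟨w, hw, 0, h0, by simp⟩, ⟨w, hw, 0, h0, by simp⟩⟩
    -- Wc as a submodule
    let S : Submodule ℝ V :=
      { carrier := Wc
        add_mem' := fun {a b} ha hb => hadd a ha b hb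
        zero_mem' := hWsub 0 (zero_mem W)
        smul_mem' := fun r v hv => hsmul r v hv }
    -- the cone inside S
    let s : PointedCone ℝ S :=
      { carrier := {x : S | (x : V) ∈ C}
        smul_mem' := fun r x hx => by
          simpa using hC_smul r r.2 _ hx
        add_mem' := fun {x y} hx hy => hC_add _ hx _ hy
        zero_mem' := h0 }
    -- the linear pmap
    let incl : (W.comap S.subtype) →ₗ[ℝ] W :=
      { toFun := fun x => ⟨(x : S), x.2⟩
        map_add' := fun x y => rfl
        map_smul' := fun r x => rfl }
    let f : S →ₗ.[ℝ] ℝ := ⟨W.comap S.subtype, L.comp incl⟩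
    have nonneg : ∀ x : f.domain, (x : S) ∈ s → 0 ≤ f x := by
      intro x hx
      exact hL ⟨(x : S), x.2⟩ hx
    have dense : ∀ y : S, ∃ x : f.domain, (x : S) + y ∈ s := by
      rintro ⟨y, ⟨w, hw, c, hc, rfl⟩, -⟩
      refine ⟨⟨⟨-w, neg_mem (hWsub w hw)⟩, neg_mem hw⟩, ?_⟩
      show (-w) + (w + c) ∈ C
      simpa using hc
    obtain ⟨g, hg1, hg2⟩ := riesz_extension s f nonneg dense
    obtain ⟨Lbar, hLbar⟩ := LinearMap.exists_extend g
    refine ⟨Lbar, fun x _ y _ => Lbar.map_add x y, fun r x _ => by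
      rw [Lbar.map_smul]; rfl, ?_, ?_⟩
    · intro w
      have hwS : (w : V) ∈ S := hWsub w w.2
      have h1 : Lbar (w : V) = g ⟨(w : V), hwS⟩ := by
        have := congrArg (fun h => h ⟨(w : V), hwS⟩) hLbar
        simpa using this
      have h2 : g ⟨(w : V), hwS⟩ = L w := by
        have := hg1 ⟨⟨(w : V), hwS⟩, w.2⟩
        simpa [f, incl] using this
      rw [h1, h2]
    · intro v hv hvC
      have hvS : v ∈ S := hv
      have h1 : Lbar v = g ⟨v, hvS⟩ := by
        have := congrArg (fun h => h ⟨v, hvS⟩) hLbar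
        simpa using this
      rw [h1]
      exact hg2 ⟨v, hvS⟩ hvC
  · -- C empty, Wc empty
    rw [Set.not_nonempty_iff_eq_empty] at hCne
    subst hCne
    obtain ⟨Lbar, hLbar⟩ := LinearMap.exists_extend L
    refine ⟨Lbar, ?_, ?_, ?_, ?_⟩
    · rintro x ⟨⟨w, hw, c, hc, -⟩, -⟩; exact absurd hc (Set.notMem_empty c)
    · rintro r x ⟨⟨w, hw, c, hc, -⟩, -⟩; exact absurd hc (Set.notMem_empty c)
    · intro w
      have := congrArg (fun h => h w) hLbar
      simpa using this
    · rintro v ⟨⟨w, hw, c, hc, -⟩, -⟩; exact absurd hc (Set.notMem_empty c)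
end

section
/- Let 𝒫 ⊂ ℝ[X₁,…,Xₙ] be a family of polynomials each of total degree at most k. Then there exists a polynomial p of degree at most k+1 if k is odd, and at most k+2 if k is even, such that p(y) ≥ 1 for all y ∈ ℝⁿ and for every f ∈ 𝒫 the function y ↦ f(y)/p(y) is bounded on ℝⁿ. -/
open MvPolynomial

private lemma aux_pow_le (s : ℝ) (hs : 0 ≤ s) (m : ℕ) :
    (1 + s) ^ m ≤ 2 ^ m * (1 + s ^ m) := by
  have h1 : (1 + s) ^ m ≤ (2 * max 1 s) ^ m := by
    apply pow_le_pow_left₀ (by linarith)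
    rcases le_total s 1 with h | h
    · rw [max_eq_left h]; linarith
    · rw [max_eq_right h]; linarith
  have h2 : (2 * max 1 s) ^ m = 2 ^ m * (max 1 s) ^ m := by ring
  have h3 : (max 1 s) ^ m ≤ 1 + s ^ m := by
    rcases le_total s 1 with h | h
    · rw [max_eq_left h]; simp
      positivity
    · rw [max_eq_right h]
      nlinarith [pow_nonneg hs m]
  calc (1 + s) ^ m ≤ 2 ^ m * (max 1 s) ^ m := by rw [← h2]; exact h1
    _ ≤ 2 ^ m * (1 + s ^ m) := by
        apply mul_le_mul_of_nonneg_left h3 (by positivity)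

/-- for a family `P` of polynomials of total degree at most `k`, there
is a polynomial `p ≥ 1` on `ℝⁿ`, of degree at most `k+1` if `k` is odd and `k+2` if
`k` is even, such that `f/p` is bounded on `ℝⁿ` for every `f ∈ P`. -/
theorem family_dominated_by_poly
    (n k : ℕ) (P : Set (MvPolynomial (Fin n) ℝ))
    (hP : ∀ f ∈ P, f.totalDegree ≤ k) :
    ∃ p : MvPolynomial (Fin n) ℝ,
      p.totalDegree ≤ (if Odd k then k + 1 else k + 2) ∧
      (∀ y : Fin n → ℝ, 1 ≤ eval y p) ∧
      (∀ f ∈ P, ∃ M : ℝ, ∀ y : Fin n → ℝ, |eval y f / eval y p| ≤ M) := by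
  set m : ℕ := (k + 2) / 2 with hm
  have h2m : 2 * m = if Odd k then k + 1 else k + 2 := by
    rcases Nat.even_or_odd k with h | h
    · rw [if_neg (Nat.not_odd_iff_even.mpr h)]
      obtain ⟨j, rfl⟩ := h
      omega
    · rw [if_pos h]
      obtain ⟨j, rfl⟩ := h
      omega
  have hk2m : k ≤ 2 * m := by omega
  refine ⟨1 + (∑ i : Fin n, X i ^ 2) ^ m, ?_, ?_, ?_⟩
  · apply le_trans (totalDegree_add _ _)
    rw [← h2m]
    apply max_le (by simp)
    apply le_trans (totalDegree_pow _ _)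
    rw [mul_comm]
    apply Nat.mul_le_mul_right
    apply le_trans (totalDegree_finset_sum _ _)
    apply Finset.sup_le
    intro i _
    apply le_trans (totalDegree_pow _ _)
    simp [totalDegree_X]
  · intro y
    simp only [map_add, map_pow, map_sum, eval_X, map_one]
    have : 0 ≤ (∑ i : Fin n, y i ^ 2) ^ m := by positivity
    linarith
  · intro f hf
    refine ⟨(∑ d ∈ f.support, |coeff d f|) * 2 ^ m, ?_⟩
    intro y
    set s : ℝ := ∑ i : Fin n, y i ^ 2 with hsdef
    have hs : 0 ≤ s := by positivity
    have hpy : eval y (1 + (∑ i : Fin n, X i ^ 2) ^ m) = 1 + s ^ m := by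
      simp [hsdef]
    rw [hpy]
    have hp1 : (1 : ℝ) ≤ 1 + s ^ m := by
      have : 0 ≤ s ^ m := by positivity
      linarith
    have hp0 : (0 : ℝ) < 1 + s ^ m := by linarith
    rw [abs_div, abs_of_pos hp0, div_le_iff₀ hp0]
    -- bound |eval y f|
    have hbound : |eval y f| ≤ (∑ d ∈ f.support, |coeff d f|) * ((1 + s) ^ m) := by
      rw [eval_eq']
      apply le_trans (Finset.abs_sum_le_sum_abs _ _)
      rw [Finset.sum_mul]
      apply Finset.sum_le_sum
      intro d hd
      rw [abs_mul]
      apply mul_le_mul_of_nonneg_left _ (abs_nonneg _)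
      -- |∏ i, y i ^ d i| ≤ (1+s)^m
      have hyle : ∀ i : Fin n, |y i| ≤ Real.sqrt (1 + s) := by
        intro i
        rw [← Real.sqrt_sq_eq_abs]
        apply Real.sqrt_le_sqrt
        have : y i ^ 2 ≤ s := Finset.single_le_sum (fun j _ => sq_nonneg (y j))
          (Finset.mem_univ i)
        linarith
      have hr1 : (1 : ℝ) ≤ Real.sqrt (1 + s) := by
        nlinarith [Real.sq_sqrt (show (0:ℝ) ≤ 1 + s by linarith),
          Real.sqrt_nonneg (1 + s)]
      calc |∏ i : Fin n, y i ^ d i|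
          = ∏ i : Fin n, |y i| ^ d i := by
            rw [Finset.abs_prod]; exact Finset.prod_congr rfl (fun i _ => (abs_pow _ _))
        _ ≤ ∏ i : Fin n, Real.sqrt (1 + s) ^ d i := by
            apply Finset.prod_le_prod (fun i _ => by positivity)
            intro i _
            exact pow_le_pow_left₀ (abs_nonneg _) (hyle i) _
        _ = Real.sqrt (1 + s) ^ (∑ i : Fin n, d i) := by
            rw [Finset.prod_pow_eq_pow_sum]
        _ ≤ Real.sqrt (1 + s) ^ (2 * m) := by
            apply pow_le_pow_right₀ hr1
            have hdeg : (∑ i : Fin n, d i) ≤ f.totalDegree := by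
              have := MvPolynomial.le_totalDegree hd
              rwa [Finsupp.sum_fintype _ _ (fun _ => rfl)] at this
            exact le_trans (le_trans hdeg (hP f hf)) hk2m
        _ = (1 + s) ^ m := by
            rw [pow_mul, Real.sq_sqrt (by linarith)]
    calc |eval y f| ≤ (∑ d ∈ f.support, |coeff d f|) * ((1 + s) ^ m) := hbound
      _ ≤ (∑ d ∈ f.support, |coeff d f|) * (2 ^ m * (1 + s ^ m)) := by
          apply mul_le_mul_of_nonneg_left (aux_pow_le s hs m)
          exact Finset.sum_nonneg (fun d _ => abs_nonneg _)
      _ = (∑ d ∈ f.support, |coeff d f|) * 2 ^ m * (1 + s ^ m) := by ring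
end

section
/- Let K be a compact Hausdorff topological space and B a linear subspace of C(K;ℝ) containing the constant function 1. Define the state space St(B) := {L ∈ B* : L(1) = 1 = ‖L‖, and L(b) ≥ 0 for all b ∈ B with b ≥ 0 on K}, equipped with the weak-* topology, and let ℰ: K → St(B) send x to the evaluation functional e_x. Then St(B) equals the weak-* closed convex hull of ℰ(K). -/
open Topology Filter

open Topology Filter

theorem pi_dual_finite {ι : Type*} (f : (ι → ℝ) →L[ℝ] ℝ) :
    ∃ (s : Finset ι) (c : ι → ℝ), ∀ φ : ι → ℝ, f φ = ∑ b ∈ s, c b * φ b := by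
  classical
  have h0 : f ⁻¹' Metric.ball 0 1 ∈ 𝓝 (0 : ι → ℝ) := by
    have hc : ContinuousAt f 0 := f.continuous.continuousAt
    exact hc.preimage_mem_nhds (by simpa [map_zero] using Metric.ball_mem_nhds (0 : ℝ) one_pos)
  rw [nhds_pi, Filter.mem_pi] at h0
  obtain ⟨I, hIfin, t, ht, hsub⟩ := h0
  have hker : ∀ φ : ι → ℝ, (∀ i ∈ I, φ i = 0) → f φ = 0 := by
    intro φ hφ
    by_contra hne
    have habs : 0 < |f φ| := abs_pos.mpr hne
    set r : ℝ := 2 / |f φ| with hr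
    have hrpos : 0 < r := by positivity
    have hmem : r • φ ∈ I.pi t := by
      intro i hi
      have hz : (r • φ) i = 0 := by simp [hφ i hi]
      rw [hz]
      exact mem_of_mem_nhds (ht i)
    have hlt := hsub hmem
    simp only [Set.mem_preimage, Metric.mem_ball, dist_zero_right, Real.norm_eq_abs] at hlt
    rw [map_smul, smul_eq_mul, abs_mul, abs_of_pos hrpos, hr,
      div_mul_cancel₀ _ habs.ne'] at hlt
    norm_num at hlt
  refine ⟨hIfin.toFinset, fun i => f (Pi.single i 1), fun φ => ?_⟩
  have hψ : f (φ - ∑ i ∈ hIfin.toFinset, φ i • (Pi.single i 1 : ι → ℝ)) = 0 := by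
    apply hker
    intro i hi
    have hi' : i ∈ hIfin.toFinset := hIfin.mem_toFinset.mpr hi
    simp only [Pi.sub_apply, Finset.sum_apply, Pi.smul_apply, Pi.single_apply, smul_eq_mul,
      mul_ite, mul_one, mul_zero, Finset.sum_ite_eq, hi', if_true, sub_self]
  rw [map_sub, map_sum, sub_eq_zero] at hψ
  rw [hψ]
  exact Finset.sum_congr rfl fun i _ => by rw [map_smul, smul_eq_mul, mul_comm]



/-- for a compact Hausdorff `K` and a subspace `B ⊆ C(K,ℝ)` containing
`1`, the state space `St(B)` (linear functionals with `L(1)=1=‖L‖` that are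
nonnegative on functions nonnegative on `K`), viewed inside `↥B → ℝ` with the
topology of pointwise convergence (the weak-* topology), equals the closed convex
hull of the set of evaluation functionals at points of `K`. -/
theorem state_space_eq_closed_convexHull_of_evaluations
    {K : Type*} [TopologicalSpace K] [CompactSpace K] [T2Space K]
    (B : Submodule ℝ C(K, ℝ)) (h1 : (1 : C(K, ℝ)) ∈ B) :
    {φ : B → ℝ | ∃ L : B →ₗ[ℝ] ℝ, φ = ⇑L ∧
        L ⟨1, h1⟩ = 1 ∧
        (∀ b : B, |L b| ≤ ‖(b : C(K, ℝ))‖) ∧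
        (∀ b : B, (∀ x : K, 0 ≤ (b : C(K, ℝ)) x) → 0 ≤ L b)} =
      closure (convexHull ℝ
        {φ : B → ℝ | ∃ x : K, φ = fun b : B => (b : C(K, ℝ)) x}) := by
  classical
  rcases isEmpty_or_nonempty K with hK | hK
  · -- both sides empty
    have hC : (1 : C(K, ℝ)) = 0 := by ext x; exact isEmptyElim x
    have hev : {φ : B → ℝ | ∃ x : K, φ = fun b : B => (b : C(K, ℝ)) x} = ∅ := by
      rw [Set.eq_empty_iff_forall_notMem]; rintro ψ ⟨x, -⟩; exact isEmptyElim x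
    rw [hev, convexHull_empty, closure_empty, Set.eq_empty_iff_forall_notMem]
    rintro φ ⟨L, -, hL1, hLn, -⟩
    have h := hLn ⟨1, h1⟩
    rw [hL1] at h
    simp [hC] at h
    exact absurd h (by norm_num)
  -- the elementary closed-convex description S of the state space
  set S : Set (B → ℝ) := {φ : B → ℝ |
      (∀ b c : B, φ (b + c) = φ b + φ c) ∧
      (∀ (r : ℝ) (b : B), φ (r • b) = r * φ b) ∧
      φ ⟨1, h1⟩ = 1 ∧
      (∀ b : B, |φ b| ≤ ‖(b : C(K, ℝ))‖) ∧
      (∀ b : B, (∀ x : K, 0 ≤ (b : C(K, ℝ)) x) → 0 ≤ φ b)} with hS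
  have hLS : {φ : B → ℝ | ∃ L : B →ₗ[ℝ] ℝ, φ = ⇑L ∧
        L ⟨1, h1⟩ = 1 ∧
        (∀ b : B, |L b| ≤ ‖(b : C(K, ℝ))‖) ∧
        (∀ b : B, (∀ x : K, 0 ≤ (b : C(K, ℝ)) x) → 0 ≤ L b)} = S := by
    ext φ
    constructor
    · rintro ⟨L, rfl, hL1, hLn, hLp⟩
      exact ⟨fun b c => L.map_add b c, fun r b => by rw [L.map_smul, smul_eq_mul],
        hL1, hLn, hLp⟩
    · rintro ⟨hadd, hsmul, h1', hn, hp⟩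
      exact ⟨{ toFun := φ, map_add' := hadd,
               map_smul' := fun r b => by simpa using hsmul r b }, rfl, h1', hn, hp⟩
  have hA1 : IsClosed {φ : B → ℝ | ∀ b c : B, φ (b + c) = φ b + φ c} := by
    simp only [Set.setOf_forall]
    exact isClosed_iInter fun b => isClosed_iInter fun c =>
      isClosed_eq (continuous_apply _) ((continuous_apply b).add (continuous_apply c))
  have hA2 : IsClosed {φ : B → ℝ | ∀ (r : ℝ) (b : B), φ (r • b) = r * φ b} := by
    simp only [Set.setOf_forall]
    exact isClosed_iInter fun r => isClosed_iInter fun b =>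
      isClosed_eq (continuous_apply _) ((continuous_apply b).const_smul r)
  have hA3 : IsClosed {φ : B → ℝ | φ ⟨1, h1⟩ = 1} :=
    isClosed_eq (continuous_apply _) continuous_const
  have hA4 : IsClosed {φ : B → ℝ | ∀ b : B, |φ b| ≤ ‖(b : C(K, ℝ))‖} := by
    simp only [Set.setOf_forall]
    exact isClosed_iInter fun b => isClosed_le (continuous_apply b).abs continuous_const
  have hA5 : IsClosed {φ : B → ℝ | ∀ b : B, (∀ x : K, 0 ≤ (b : C(K, ℝ)) x) → 0 ≤ φ b} := by
    have e : {φ : B → ℝ | ∀ b : B, (∀ x : K, 0 ≤ (b : C(K, ℝ)) x) → 0 ≤ φ b} =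
        ⋂ b : {b : B // ∀ x : K, 0 ≤ (b : C(K, ℝ)) x}, {φ : B → ℝ | 0 ≤ φ b.1} := by
      ext ψ
      simp only [Set.mem_setOf_eq, Set.mem_iInter, Subtype.forall]
    rw [e]
    exact isClosed_iInter fun b => isClosed_le continuous_const (continuous_apply b.1)
  have hSclosed : IsClosed S := by
    have e : S = {φ : B → ℝ | ∀ b c : B, φ (b + c) = φ b + φ c} ∩
        ({φ : B → ℝ | ∀ (r : ℝ) (b : B), φ (r • b) = r * φ b} ∩
        ({φ : B → ℝ | φ ⟨1, h1⟩ = 1} ∩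
        ({φ : B → ℝ | ∀ b : B, |φ b| ≤ ‖(b : C(K, ℝ))‖} ∩
        {φ : B → ℝ | ∀ b : B, (∀ x : K, 0 ≤ (b : C(K, ℝ)) x) → 0 ≤ φ b}))) := rfl
    rw [e]
    exact hA1.inter (hA2.inter (hA3.inter (hA4.inter hA5)))
  have hSconvex : Convex ℝ S := by
    rintro φ hφ ψ hψ a b ha hb hab
    obtain ⟨hφa, hφs, hφ1, hφn, hφp⟩ := hφ
    obtain ⟨hψa, hψs, hψ1, hψn, hψp⟩ := hψ
    refine ⟨?_, ?_, ?_, ?_, ?_⟩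
    · intro u v
      simp only [Pi.add_apply, Pi.smul_apply, smul_eq_mul, hφa, hψa]
      ring
    · intro r u
      simp only [Pi.add_apply, Pi.smul_apply, smul_eq_mul, hφs, hψs]
      ring
    · simp only [Pi.add_apply, Pi.smul_apply, smul_eq_mul, hφ1, hψ1]
      linarith
    · intro u
      simp only [Pi.add_apply, Pi.smul_apply, smul_eq_mul]
      calc |a * φ u + b * ψ u| ≤ |a * φ u| + |b * ψ u| := abs_add_le _ _
        _ = a * |φ u| + b * |ψ u| := by rw [abs_mul, abs_mul, abs_of_nonneg ha, abs_of_nonneg hb]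
        _ ≤ a * ‖(u : C(K, ℝ))‖ + b * ‖(u : C(K, ℝ))‖ := by
            gcongr <;> [exact hφn u; exact hψn u]
        _ = ‖(u : C(K, ℝ))‖ := by rw [← add_mul, hab, one_mul]
    · intro u hu
      simp only [Pi.add_apply, Pi.smul_apply, smul_eq_mul]
      exact add_nonneg (mul_nonneg ha (hφp u hu)) (mul_nonneg hb (hψp u hu))
  have hevS : {φ : B → ℝ | ∃ x : K, φ = fun b : B => (b : C(K, ℝ)) x} ⊆ S := by
    rintro φ ⟨x, rfl⟩
    refine ⟨?_, ?_, ?_, ?_, ?_⟩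
    · intro u v; simp
    · intro r u; simp
    · simp
    · intro u
      simpa [Real.norm_eq_abs] using (u : C(K, ℝ)).norm_coe_le_norm x
    · intro u hu; exact hu x
  rw [hLS]
  apply Set.Subset.antisymm
  · -- hard direction : separation
    intro φ hφ
    obtain ⟨hadd, hsmul, h1', hn, hp⟩ := hφ
    set L : B →ₗ[ℝ] ℝ :=
      { toFun := φ, map_add' := hadd, map_smul' := fun r b => by simpa using hsmul r b } with hLdef
    by_contra hmem
    obtain ⟨f, u, hfu, huf⟩ :=
      geometric_hahn_banach_closed_point ((convex_convexHull ℝ _).closure) isClosed_closure hmem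
    obtain ⟨s, c, hf⟩ := pi_dual_finite f
    set g : B := ∑ b ∈ s, c b • b with hg
    have hgx : ∀ x : K, (g : C(K, ℝ)) x = f (fun b : B => (b : C(K, ℝ)) x) := by
      intro x
      rw [hf]
      rw [hg]
      simp [Submodule.coe_sum]
    have hLg : L g = f φ := by
      rw [hf, hg, map_sum]
      exact Finset.sum_congr rfl fun i _ => by rw [map_smul, smul_eq_mul]; rfl
    obtain ⟨x₀, -, hx₀⟩ := isCompact_univ.exists_isMaxOn Set.univ_nonempty
      (g : C(K, ℝ)).continuous.continuousOn
    set m : ℝ := (g : C(K, ℝ)) x₀ with hm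
    have hpos : ∀ x : K, 0 ≤ ((m • (⟨1, h1⟩ : B) - g : B) : C(K, ℝ)) x := by
      intro x
      have hmax : (g : C(K, ℝ)) x ≤ (g : C(K, ℝ)) x₀ := hx₀ (Set.mem_univ x)
      simp only [Submodule.coe_sub, Submodule.coe_smul, ContinuousMap.sub_apply,
        ContinuousMap.smul_apply, ContinuousMap.one_apply, smul_eq_mul, mul_one]
      linarith
    have hLle : L g ≤ m := by
      have h0 := hp _ hpos
      have hcalc : φ (m • (⟨1, h1⟩ : B) - g) = m * φ ⟨1, h1⟩ - φ g := by
        have hsub : φ (m • (⟨1, h1⟩ : B) - g) = φ (m • (⟨1, h1⟩ : B)) + φ (-g) := by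
          rw [sub_eq_add_neg]; exact hadd _ _
        have hneg : φ (-g) = -φ g := by
          have h := hsmul (-1 : ℝ) g
          rw [← neg_one_smul ℝ g, h]
          ring
        rw [hsub, hneg, hsmul]
        ring
      rw [hcalc, h1', mul_one] at h0
      have hLgφ : L g = φ g := rfl
      linarith [hLgφ]
    have hxmem : (fun b : B => (b : C(K, ℝ)) x₀) ∈
        closure (convexHull ℝ {φ : B → ℝ | ∃ x : K, φ = fun b : B => (b : C(K, ℝ)) x}) :=
      subset_closure (subset_convexHull ℝ _ ⟨x₀, rfl⟩)
    have h1x := hfu _ hxmem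
    have : m = f (fun b : B => (b : C(K, ℝ)) x₀) := hgx x₀
    have hφg : f φ = L g := hLg.symm
    linarith
  · exact closure_minimal (convexHull_min hevS hSconvex) hSclosed
end

section
/- Let K be a compact Hausdorff space, μ a positive Radon probability measure on K, B a linear subspace of C(K;ℝ) containing 1, and L_μ(f) := ∫ f dμ. Define the equivalence L₁ ∼_B L₂ on states of C(K;ℝ) by L₁|_B = L₂|_B. If the image of B in L¹(μ) is dense (in the L¹(μ) norm), then L_μ is an extreme point of its equivalence class [L_μ]_{∼_B}. -/
open MeasureTheory

private lemma cm_integrable {K : Type*} [TopologicalSpace K] [CompactSpace K] [T2Space K]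
    [MeasurableSpace K] [BorelSpace K] (μ : Measure K) [IsProbabilityMeasure μ]
    (f : C(K, ℝ)) : Integrable (fun x => f x) μ :=
  f.continuous.integrable_of_hasCompactSupport (HasCompactSupport.of_compactSpace f)

/-- If `φ` is a state and `a • φ ≤ L_μ` (as positive functionals) in the sense that
`a * φ g + (nonneg) = ∫ g` for nonneg `g`, and `φ` agrees with `L_μ` on a dense-in-L¹
subspace, then `φ = L_μ`. -/
private lemma key_eq {K : Type*} [TopologicalSpace K] [CompactSpace K] [T2Space K]
    [MeasurableSpace K] [BorelSpace K]
    (μ : Measure K) [IsProbabilityMeasure μ] [μ.Regular]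
    (B : Submodule ℝ C(K, ℝ))
    (hdense : Dense ((ContinuousMap.toLp (E := ℝ) 1 μ ℝ) '' (B : Set C(K, ℝ))))
    (φ : C(K, ℝ) → ℝ) (hlin : IsLinearMap ℝ φ)
    (hpos : ∀ f : C(K, ℝ), (∀ x, 0 ≤ f x) → 0 ≤ φ f)
    (hB : ∀ b ∈ B, φ b = ∫ x, (b : C(K, ℝ)) x ∂μ)
    (a : ℝ) (ha : 0 < a)
    (hdom : ∀ g : C(K, ℝ), (∀ x, 0 ≤ g x) → a * φ g ≤ ∫ x, g x ∂μ) :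
    φ = fun f : C(K, ℝ) => ∫ x, f x ∂μ := by
  -- norm of toLp
  have hnorm : ∀ g : C(K, ℝ),
      ‖(ContinuousMap.toLp (E := ℝ) 1 μ ℝ) g‖ = ∫ x, |g x| ∂μ := by
    intro g
    rw [L1.norm_eq_integral_norm]
    refine integral_congr_ae ?_
    filter_upwards [ContinuousMap.coeFn_toLp (E := ℝ) μ (𝕜 := ℝ) (p := 1) g] with x hx
    rw [Real.norm_eq_abs, hx]
  -- |φ g| ≤ (1/a) ∫ |g|
  have habs : ∀ g : C(K, ℝ), |φ g| ≤ (1 / a) * ∫ x, |g x| ∂μ := by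
    intro g
    have h1 : φ g ≤ φ |g| := by
      have := hpos (|g| - g) (fun x => by
        simp only [ContinuousMap.sub_apply, ContinuousMap.abs_apply, sub_nonneg]
        exact le_abs_self _)
      have hsub := hlin.map_sub |g| g
      linarith [hsub ▸ this]
    have h2 : -φ g ≤ φ |g| := by
      have := hpos (|g| + g) (fun x => by
        simp only [ContinuousMap.add_apply, ContinuousMap.abs_apply]
        linarith [neg_abs_le (g x)])
      have hadd := hlin.map_add |g| g
      linarith [hadd ▸ this]
    have h3 : a * φ |g| ≤ ∫ x, |g x| ∂μ := by
      have := hdom |g| (fun x => by simp [ContinuousMap.abs_apply, abs_nonneg])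
      simpa [ContinuousMap.abs_apply] using this
    have h4 : φ |g| ≤ (1 / a) * ∫ x, |g x| ∂μ := by
      rw [one_div, ← div_eq_inv_mul, le_div_iff₀ ha]
      nlinarith [h3]
    calc |φ g| ≤ φ |g| := abs_le.mpr ⟨by linarith, h1⟩
    _ ≤ _ := h4
  funext f
  -- show |φ f - ∫ f| ≤ (1 + 1/a) * ε for all ε > 0
  by_contra hne
  have hpos' : 0 < |φ f - ∫ x, f x ∂μ| := abs_pos.mpr (sub_ne_zero.mpr hne)
  set C : ℝ := 1 + 1 / a with hC
  have hCpos : 0 < C := by positivity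
  obtain ⟨y, hy, hdist⟩ := Metric.mem_closure_iff.mp
    (hdense ((ContinuousMap.toLp (E := ℝ) 1 μ ℝ) f)) (|φ f - ∫ x, f x ∂μ| / C)
    (by positivity)
  obtain ⟨b, hbB, rfl⟩ := hy
  have hεb : ‖(ContinuousMap.toLp (E := ℝ) 1 μ ℝ) f -
      (ContinuousMap.toLp (E := ℝ) 1 μ ℝ) b‖ < |φ f - ∫ x, f x ∂μ| / C := by
    rw [← dist_eq_norm]; exact hdist
  rw [← map_sub, hnorm] at hεb
  -- bound
  have hint : ∀ g : C(K, ℝ), Integrable (fun x => g x) μ := cm_integrable μ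
  have hintegral : |∫ x, (f - b : C(K, ℝ)) x ∂μ| ≤ ∫ x, |(f - b : C(K, ℝ)) x| ∂μ := by
    simpa [Real.norm_eq_abs] using
      norm_integral_le_integral_norm (μ := μ) (fun x => (f - b : C(K, ℝ)) x)
  have hφfb : φ (f - b) = φ f - ∫ x, (b : C(K, ℝ)) x ∂μ := by
    rw [hlin.map_sub, hB b hbB]
  have hIfb : ∫ x, (f - b : C(K, ℝ)) x ∂μ
      = (∫ x, f x ∂μ) - ∫ x, (b : C(K, ℝ)) x ∂μ := by
    simp only [ContinuousMap.sub_apply]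
    exact integral_sub (hint f) (hint b)
  have hbound : |φ f - ∫ x, f x ∂μ| ≤ C * ∫ x, |(f - b : C(K, ℝ)) x| ∂μ := by
    have h1 := habs (f - b)
    have : φ f - ∫ x, f x ∂μ = φ (f - b) - ∫ x, (f - b : C(K, ℝ)) x ∂μ := by
      rw [hφfb, hIfb]; ring
    rw [this]
    calc |φ (f - b) - ∫ x, (f - b : C(K, ℝ)) x ∂μ|
        ≤ |φ (f - b)| + |∫ x, (f - b : C(K, ℝ)) x ∂μ| := abs_sub _ _
      _ ≤ (1 / a) * (∫ x, |(f - b : C(K, ℝ)) x| ∂μ)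
          + ∫ x, |(f - b : C(K, ℝ)) x| ∂μ := add_le_add h1 hintegral
      _ = C * ∫ x, |(f - b : C(K, ℝ)) x| ∂μ := by rw [hC]; ring
  have : |φ f - ∫ x, f x ∂μ| < C * (|φ f - ∫ x, f x ∂μ| / C) := by
    calc |φ f - ∫ x, f x ∂μ| ≤ C * ∫ x, |(f - b : C(K, ℝ)) x| ∂μ := hbound
      _ < C * (|φ f - ∫ x, f x ∂μ| / C) := by
          exact (mul_lt_mul_iff_right₀ hCpos).mpr hεb
  rw [mul_div_cancel₀ _ (ne_of_gt hCpos)] at this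
  exact lt_irrefl _ this

/-- if the image of `B` in `L¹(μ)` is dense, then `L_μ : f ↦ ∫ f dμ`
is an extreme point of the set of states of `C(K,ℝ)` agreeing with `L_μ` on `B`. -/
theorem extreme_of_dense_in_L1
    {K : Type*} [TopologicalSpace K] [CompactSpace K] [T2Space K]
    [MeasurableSpace K] [BorelSpace K]
    (μ : Measure K) [IsProbabilityMeasure μ] [μ.Regular]
    (B : Submodule ℝ C(K, ℝ)) (h1 : (1 : C(K, ℝ)) ∈ B)
    (hdense : Dense ((ContinuousMap.toLp (E := ℝ) 1 μ ℝ) '' (B : Set C(K, ℝ)))) :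
    (fun f : C(K, ℝ) => ∫ x, f x ∂μ) ∈
      Set.extremePoints ℝ
        {φ : C(K, ℝ) → ℝ | IsLinearMap ℝ φ ∧ φ 1 = 1 ∧
          (∀ f : C(K, ℝ), (∀ x, 0 ≤ f x) → 0 ≤ φ f) ∧
          (∀ b ∈ B, φ b = ∫ x, (b : C(K, ℝ)) x ∂μ)} := by
  have hint : ∀ g : C(K, ℝ), Integrable (fun x => g x) μ := cm_integrable μ
  constructor
  · refine ⟨⟨fun f g => ?_, fun c f => ?_⟩, ?_, fun f hf => integral_nonneg hf, fun b _ => rfl⟩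
    · simp only [ContinuousMap.add_apply]
      exact integral_add (hint f) (hint g)
    · simp only [ContinuousMap.smul_apply, smul_eq_mul]
      exact integral_smul c fun x => f x
    · simp only [ContinuousMap.one_apply]
      simp
  · rintro φ hφ ψ hψ ⟨s, t, hs, ht, hst, hsum⟩
    obtain ⟨hφlin, hφ1, hφpos, hφB⟩ := hφ
    obtain ⟨hψlin, hψ1, hψpos, hψB⟩ := hψ
    have hsum' : ∀ g : C(K, ℝ), s * φ g + t * ψ g = ∫ x, g x ∂μ := by
      intro g
      have := congrFun hsum g
      simpa using this
    have hφdom : ∀ g : C(K, ℝ), (∀ x, 0 ≤ g x) → s * φ g ≤ ∫ x, g x ∂μ := by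
      intro g hg
      have := hsum' g
      nlinarith [hψpos g hg]
    have hψdom : ∀ g : C(K, ℝ), (∀ x, 0 ≤ g x) → t * ψ g ≤ ∫ x, g x ∂μ := by
      intro g hg
      have := hsum' g
      nlinarith [hφpos g hg]
    exact key_eq μ B hdense φ hφlin hφpos hφB s hs hφdom
end

section
/- Let K be a compact Hausdorff space, μ a positive Radon probability measure on K, B ⊆ C(K;ℝ) a linear subspace containing 1, and L_μ(f) := ∫ f dμ. If L_μ is an extreme point of the set of states of C(K;ℝ) agreeing with L_μ on B, then B is dense in L¹(μ). -/
open MeasureTheory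

/-- if `L_μ : f ↦ ∫ f dμ` is an extreme point of the set of states of
`C(K,ℝ)` agreeing with `L_μ` on `B`, then the image of `B` is dense in `L¹(μ)`. -/
theorem dense_in_L1_of_extreme
    {K : Type*} [TopologicalSpace K] [CompactSpace K] [T2Space K]
    [MeasurableSpace K] [BorelSpace K]
    (μ : Measure K) [IsProbabilityMeasure μ] [μ.Regular]
    (B : Submodule ℝ C(K, ℝ)) (h1 : (1 : C(K, ℝ)) ∈ B)
    (hext : (fun f : C(K, ℝ) => ∫ x, f x ∂μ) ∈
      Set.extremePoints ℝ
        {φ : C(K, ℝ) → ℝ | IsLinearMap ℝ φ ∧ φ 1 = 1 ∧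
          (∀ f : C(K, ℝ), (∀ x, 0 ≤ f x) → 0 ≤ φ f) ∧
          (∀ b ∈ B, φ b = ∫ x, (b : C(K, ℝ)) x ∂μ)}) :
    Dense ((ContinuousMap.toLp (E := ℝ) 1 μ ℝ) '' (B : Set C(K, ℝ))) := by
  set T : C(K, ℝ) →L[ℝ] Lp ℝ 1 μ := ContinuousMap.toLp (E := ℝ) 1 μ ℝ with hT
  have hint : ∀ f : C(K, ℝ), Integrable (⇑f) μ := fun f =>
    f.continuous.integrable_of_hasCompactSupport (HasCompactSupport.of_compactSpace f)
  by_contra hnd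
  set S := (B.map (T : C(K, ℝ) →ₗ[ℝ] Lp ℝ 1 μ)).topologicalClosure with hS
  have hScoe : (S : Set (Lp ℝ 1 μ)) = closure (T '' (B : Set C(K, ℝ))) := by
    rw [hS, Submodule.topologicalClosure_coe, Submodule.map_coe]
    rfl
  obtain ⟨x, hx⟩ : ∃ x, x ∉ S := by
    by_contra h
    push_neg at h
    apply hnd
    rw [dense_iff_closure_eq]
    apply Set.eq_univ_of_forall
    intro y
    rw [← hScoe]
    exact h y
  obtain ⟨φ, u, hφlt, hux⟩ :=
    geometric_hahn_banach_closed_point (S.convex) (Submodule.isClosed_topologicalClosure _) hx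
  have hu0 : 0 < u := by simpa using hφlt 0 S.zero_mem
  have hφ0 : ∀ y ∈ S, φ y = 0 := by
    intro y hy
    by_contra h
    have h2 := hφlt (((2 * u) / φ y) • y) (S.smul_mem _ hy)
    rw [φ.map_smul, smul_eq_mul, div_mul_cancel₀ _ h] at h2
    linarith
  have hφx : 0 < φ x := lt_trans hu0 hux
  have hφne : φ ≠ 0 := by
    intro h; rw [h] at hφx; simp at hφx
  have hc : 0 < ‖φ‖ := norm_pos_iff.mpr hφne
  set ψ : Lp ℝ 1 μ →L[ℝ] ℝ := ‖φ‖⁻¹ • φ with hψ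
  have hψnorm : ‖ψ‖ ≤ 1 := by
    have h := norm_smul_le (‖φ‖⁻¹) φ
    rw [Real.norm_eq_abs, abs_of_nonneg (inv_nonneg.2 hc.le), inv_mul_cancel₀ hc.ne'] at h
    exact h
  have hψ0 : ∀ y ∈ S, ψ y = 0 := by
    intro y hy
    simp [hψ, hφ0 y hy]
  have hmemS : ∀ b ∈ B, T b ∈ S := fun b hb =>
    Submodule.le_topologicalClosure _ (Submodule.mem_map_of_mem hb)
  -- norm of toLp of a nonnegative function
  have hnorm : ∀ f : C(K, ℝ), (∀ x, 0 ≤ f x) → ‖T f‖ = ∫ x, f x ∂μ := by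
    intro f hf
    have hae : (⇑(T f) : K → ℝ) =ᵐ[μ] ⇑f := ContinuousMap.coeFn_toLp (p := 1) (𝕜 := ℝ) μ f
    rw [L1.norm_eq_integral_norm]
    refine integral_congr_ae ?_
    filter_upwards [hae] with a ha
    rw [ha, Real.norm_of_nonneg (hf a)]
  have hbound : ∀ f : C(K, ℝ), (∀ x, 0 ≤ f x) → |ψ (T f)| ≤ ∫ x, f x ∂μ := by
    intro f hf
    calc |ψ (T f)| ≤ ‖ψ‖ * ‖T f‖ := ψ.le_opNorm (T f)
      _ ≤ 1 * ‖T f‖ := by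
          apply mul_le_mul_of_nonneg_right hψnorm (norm_nonneg _)
      _ = ∫ x, f x ∂μ := by rw [one_mul, hnorm f hf]
  -- the two competing states
  set g₁ : C(K, ℝ) → ℝ := fun f => (∫ x, f x ∂μ) + ψ (T f) with hg₁
  set g₂ : C(K, ℝ) → ℝ := fun f => (∫ x, f x ∂μ) - ψ (T f) with hg₂
  have hlin : ∀ (c : ℝ), ∀ f g : C(K, ℝ),
      (∫ x, (f + g) x ∂μ) = (∫ x, f x ∂μ) + (∫ x, g x ∂μ) ∧
      (∫ x, (c • f) x ∂μ) = c * (∫ x, f x ∂μ) := by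
    intro c f g
    constructor
    · simpa using integral_add (hint f) (hint g)
    · simpa using integral_smul c (⇑f)
  have hint1 : (∫ x, (1 : C(K, ℝ)) x ∂μ) = 1 := by simp
  have hmem1 : ∀ b ∈ B, ψ (T b) = 0 := fun b hb => hψ0 _ (hmemS b hb)
  have hg₁mem : g₁ ∈ {φ : C(K, ℝ) → ℝ | IsLinearMap ℝ φ ∧ φ 1 = 1 ∧
      (∀ f : C(K, ℝ), (∀ x, 0 ≤ f x) → 0 ≤ φ f) ∧
      (∀ b ∈ B, φ b = ∫ x, (b : C(K, ℝ)) x ∂μ)} := by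
    refine ⟨⟨?_, ?_⟩, ?_, ?_, ?_⟩
    · intro f g
      simp only [hg₁, map_add, (hlin 0 f g).1]
      ring
    · intro c f
      simp only [hg₁, T.map_smul, ψ.map_smul, smul_eq_mul, (hlin c f f).2]
      ring
    · simp [hg₁, hint1, hmem1 _ h1]
    · intro f hf
      have := hbound f hf
      rw [abs_le] at this
      simp only [hg₁]
      linarith [this.1]
    · intro b hb
      simp [hg₁, hmem1 b hb]
  have hg₂mem : g₂ ∈ {φ : C(K, ℝ) → ℝ | IsLinearMap ℝ φ ∧ φ 1 = 1 ∧
      (∀ f : C(K, ℝ), (∀ x, 0 ≤ f x) → 0 ≤ φ f) ∧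
      (∀ b ∈ B, φ b = ∫ x, (b : C(K, ℝ)) x ∂μ)} := by
    refine ⟨⟨?_, ?_⟩, ?_, ?_, ?_⟩
    · intro f g
      simp only [hg₂, map_add, (hlin 0 f g).1]
      ring
    · intro c f
      simp only [hg₂, T.map_smul, ψ.map_smul, smul_eq_mul, (hlin c f f).2]
      ring
    · simp [hg₂, hint1, hmem1 _ h1]
    · intro f hf
      have := hbound f hf
      rw [abs_le] at this
      simp only [hg₂]
      linarith [this.2]
    · intro b hb
      simp [hg₂, hmem1 b hb]
  have hseg : (fun f : C(K, ℝ) => ∫ x, f x ∂μ) ∈ openSegment ℝ g₁ g₂ := by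
    refine ⟨1/2, 1/2, by norm_num, by norm_num, by norm_num, ?_⟩
    funext f
    simp only [Pi.add_apply, Pi.smul_apply, smul_eq_mul, hg₁, hg₂]
    ring
  have heq := hext.2 hg₁mem hg₂mem hseg
  have hψzero : ∀ f : C(K, ℝ), ψ (T f) = 0 := by
    intro f
    have := congrFun heq f
    simp only [hg₁] at this
    linarith
  have hd : DenseRange (⇑T) := ContinuousMap.toLp_denseRange ℝ μ ℝ (by norm_num)
  have : (⇑ψ : Lp ℝ 1 μ → ℝ) = fun _ => 0 := by
    apply hd.equalizer ψ.continuous continuous_const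
    funext f
    exact hψzero f
  have hψx : ψ x = 0 := congrFun this x
  have : φ x = 0 := by
    have : ‖φ‖⁻¹ * φ x = 0 := by simpa [hψ] using hψx
    field_simp at this
    simpa using this
  linarith
end

section
/- Let A := ℝ[X], B := ℝ[X]₄ (polynomials of degree ≤ 4), and define L: B → ℝ by L(a₀ + a₁X + a₂X² + a₃X³ + a₄X⁴) := a₀ + a₁ + a₂ + a₃ + 2a₄. Then L is ℝ-positive (L(b) ≥ 0 whenever b(x) ≥ 0 for all x ∈ ℝ) but L admits no representing measure: there is no positive Borel measure μ on ℝ with L(b) = ∫ b dμ for all b ∈ B. -/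
open Polynomial MeasureTheory Filter

/-- the functional `L(a₀+a₁X+a₂X²+a₃X³+a₄X⁴) = a₀+a₁+a₂+a₃+2a₄` on
polynomials of degree at most 4 (i.e. `L(b) = b(1) + b₄`) is ℝ-positive but admits
no representing positive Borel measure on ℝ. -/
theorem positive_functional_without_representing_measure :
    (∀ b : ℝ[X], b.degree ≤ 4 → (∀ x : ℝ, 0 ≤ b.eval x) →
        0 ≤ b.eval 1 + b.coeff 4) ∧
    ¬ ∃ μ : Measure ℝ,
        ∀ b : ℝ[X], b.degree ≤ 4 →
          Integrable (fun x => b.eval x) μ ∧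
          b.eval 1 + b.coeff 4 = ∫ x, b.eval x ∂μ := by
  constructor
  · intro b hdeg hpos
    have h4 : 0 ≤ b.coeff 4 := by
      by_contra h
      push_neg at h
      have hne : b.coeff 4 ≠ 0 := ne_of_lt h
      have hle : (4 : WithBot ℕ) ≤ b.degree := le_degree_of_ne_zero hne
      have hdeg4 : b.degree = 4 := le_antisymm hdeg hle
      have hnat : b.natDegree = 4 := natDegree_eq_of_degree_eq_some hdeg4
      have hlc : b.leadingCoeff ≤ 0 := by
        rw [leadingCoeff, hnat]; exact le_of_lt h
      have htb := b.tendsto_atBot_of_leadingCoeff_nonpos (by rw [hdeg4]; norm_num) hlc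
      obtain ⟨x, hx⟩ := (htb.eventually (eventually_lt_atBot 0)).exists
      exact absurd (hpos x) (not_le.mpr hx)
    linarith [hpos 1]
  · rintro ⟨μ, hμ⟩
    set p : ℝ[X] := (X - C 1) ^ 2 with hp
    set q : ℝ[X] := X ^ 4 - X ^ 3 with hq
    have hpdeg : p.degree ≤ 4 := by
      rw [hp]; compute_degree
      norm_num
    have hqdeg : q.degree ≤ 4 := by
      rw [hq]; compute_degree
    obtain ⟨hpint, hpeq⟩ := hμ p hpdeg
    obtain ⟨hqint, hqeq⟩ := hμ q hqdeg
    have hpc : p.coeff 4 = 0 := by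
      have : p.natDegree < 4 := by
        have : p.natDegree ≤ 2 := natDegree_pow_le.trans (by
          have : (X - C (1:ℝ)).natDegree ≤ 1 := natDegree_X_sub_C_le 1
          omega)
        omega
      exact coeff_eq_zero_of_natDegree_lt this
    have hpeval : p.eval 1 = 0 := by simp [hp]
    have hpzero : ∫ x, p.eval x ∂μ = 0 := by
      rw [← hpeq, hpeval, hpc]; ring
    have hae : (fun x => p.eval x) =ᵐ[μ] 0 := by
      rw [← integral_eq_zero_iff_of_nonneg _ hpint]
      · exact hpzero
      · intro x; simp [hp]; positivity
    have hae1 : ∀ᵐ x ∂μ, x = 1 := by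
      filter_upwards [hae] with x hx
      simp [hp] at hx
      nlinarith [sq_nonneg (x - 1)]
    have hq0 : ∫ x, q.eval x ∂μ = 0 := by
      rw [integral_congr_ae (g := fun _ => (0:ℝ))]
      · simp
      · filter_upwards [hae1] with x hx
        simp [hq, hx]
    have hqc : q.coeff 4 = 1 := by
      simp [hq, coeff_X_pow]
    have hqe : q.eval 1 = 0 := by simp [hq]
    rw [hqe, hqc, hq0] at hqeq
    norm_num at hqeq
end

section
/- Let A be a commutative unital ℝ-algebra and K a nonempty compact subset of the character space X(A) (with the weak topology making all maps â continuous). For a ∈ A define ρ_K(a) := sup_{α∈K} |α(a)| and â₊(α) := max{0, α(a)}. Then for every a ∈ A, inf_{p ∈ ΣA²} ρ_K(a + p) = sup_{α∈K} â₊(α), where ΣA² denotes the cone of finite sums of squares of elements of A. -/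
variable {A : Type*} [CommRing A] [Algebra ℝ A]

/-- The weak topology on the character space `X(A)`. -/
noncomputable instance charSpaceTopology : TopologicalSpace (A →ₐ[ℝ] ℝ) :=
  TopologicalSpace.induced (fun α => (α : A → ℝ)) Pi.topologicalSpace

lemma eval_continuous' (b : A) : Continuous fun α : (A →ₐ[ℝ] ℝ) => α b :=
  (continuous_apply b).comp continuous_induced_dom

/-- The evaluation algebra hom `A →ₐ[ℝ] C(K, ℝ)`. -/
noncomputable def evalHom (K : Set (A →ₐ[ℝ] ℝ)) : A →ₐ[ℝ] C(K, ℝ) where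
  toFun b := ⟨fun α => α.1 b, ((eval_continuous' b).comp continuous_subtype_val)⟩
  map_one' := by ext α; simp
  map_mul' x y := by ext α; simp
  map_zero' := by ext α; simp
  map_add' x y := by ext α; simp
  commutes' r := by ext α; simp [Algebra.algebraMap_eq_smul_one]

lemma evalHom_sep (K : Set (A →ₐ[ℝ] ℝ)) : ((evalHom K).range : Subalgebra ℝ C(K, ℝ)).SeparatesPoints := by
  intro x y hxy
  have : x.1 ≠ y.1 := fun h => hxy (Subtype.ext h)
  obtain ⟨b, hb⟩ : ∃ b, x.1 b ≠ y.1 b := by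
    by_contra h
    push_neg at h
    exact this (AlgHom.ext h)
  exact ⟨(evalHom K b : C(K, ℝ)), ⟨evalHom K b, ⟨b, rfl⟩, rfl⟩, hb⟩

/-- for a nonempty compact `K ⊆ X(A)` and `ρ_K(a) := sup_{α∈K}|α(a)|`,
one has `inf_{p ∈ ΣA²} ρ_K(a+p) = sup_{α∈K} max(0, α(a))` for every `a ∈ A`. -/
theorem inf_seminorm_over_sums_of_squares_eq_sup_pos_part
    (K : Set (A →ₐ[ℝ] ℝ)) (hKne : K.Nonempty) (hK : IsCompact K) (a : A) :
    sInf ((fun p => sSup ((fun α : A →ₐ[ℝ] ℝ => |α (a + p)|) '' K)) ''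
        (AddSubmonoid.closure {x : A | ∃ b : A, x = b ^ 2} : Set A)) =
      sSup ((fun α : A →ₐ[ℝ] ℝ => max 0 (α a)) '' K) := by
  haveI : CompactSpace K := isCompact_iff_compactSpace.mp hK
  set M : ℝ := sSup ((fun α : A →ₐ[ℝ] ℝ => max 0 (α a)) '' K) with hM
  -- nonnegativity of characters on sums of squares
  have hpos : ∀ p ∈ AddSubmonoid.closure {x : A | ∃ b : A, x = b ^ 2},
      ∀ α : (A →ₐ[ℝ] ℝ), 0 ≤ α p := by
    intro p hp α
    induction hp using AddSubmonoid.closure_induction with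
    | mem x hx => obtain ⟨b, rfl⟩ := hx; simp [map_pow]; positivity
    | zero => simp
    | add x y _ _ hx hy => rw [map_add]; exact add_nonneg hx hy
  -- bddAbove facts
  have hbdd : ∀ b : A, BddAbove ((fun α : A →ₐ[ℝ] ℝ => |α b|) '' K) :=
    fun b => hK.bddAbove_image ((eval_continuous' b).abs.continuousOn)
  have hbddM : BddAbove ((fun α : A →ₐ[ℝ] ℝ => max 0 (α a)) '' K) :=
    hK.bddAbove_image ((continuous_const.max (eval_continuous' a)).continuousOn)
  -- every element of the inf-set is ≥ M
  have hgeM : ∀ x ∈ ((fun p => sSup ((fun α : A →ₐ[ℝ] ℝ => |α (a + p)|) '' K)) ''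
      (AddSubmonoid.closure {x : A | ∃ b : A, x = b ^ 2} : Set A)), M ≤ x := by
    rintro x ⟨p, hp, rfl⟩
    apply csSup_le (hKne.image _)
    rintro y ⟨α, hα, rfl⟩
    calc max 0 (α a) ≤ |α (a + p)| := by
          rw [map_add]
          rcases le_or_gt (α a) 0 with h | h
          · simp only [max_eq_left h]; positivity
          · rw [max_eq_right h.le]
            exact le_trans (le_add_of_nonneg_right (hpos p hp α)) (le_abs_self _)
      _ ≤ sSup ((fun α : A →ₐ[ℝ] ℝ => |α (a + p)|) '' K) :=
          le_csSup (hbdd (a + p)) ⟨α, hα, rfl⟩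
  have hSne : ((fun p => sSup ((fun α : A →ₐ[ℝ] ℝ => |α (a + p)|) '' K)) ''
      (AddSubmonoid.closure {x : A | ∃ b : A, x = b ^ 2} : Set A)).Nonempty :=
    ⟨_, ⟨0, AddSubmonoid.zero_mem _, rfl⟩⟩
  have hSbdd : BddBelow ((fun p => sSup ((fun α : A →ₐ[ℝ] ℝ => |α (a + p)|) '' K)) ''
      (AddSubmonoid.closure {x : A | ∃ b : A, x = b ^ 2} : Set A)) := ⟨M, hgeM⟩
  have hM0 : 0 ≤ M := by
    obtain ⟨α, hα⟩ := hKne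
    exact le_trans (le_max_left _ _) (le_csSup hbddM ⟨α, hα, rfl⟩)
  apply le_antisymm
  · -- sInf ≤ M : for each ε > 0 find p with ρ(a+p) ≤ M + ε
    apply le_of_forall_pos_le_add
    intro ε hε
    -- target function: sqrt of negative part of â
    set f : C(K, ℝ) := ⟨fun α => Real.sqrt (max 0 (-(α.1 a))),
      Real.continuous_sqrt.comp (continuous_const.max
        ((eval_continuous' a).neg.comp continuous_subtype_val))⟩ with hf
    set C : ℝ := ‖f‖ with hC
    have hC0 : 0 ≤ C := norm_nonneg f
    set δ : ℝ := min 1 (ε / (1 + 2 * C)) with hδ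
    have hδpos : 0 < δ := lt_min one_pos (div_pos hε (by linarith))
    obtain ⟨⟨g, hgmem⟩, hg⟩ := ContinuousMap.exists_mem_subalgebra_near_continuousMap_of_separatesPoints
      (evalHom K).range (evalHom_sep K) f δ hδpos
    obtain ⟨b, rfl⟩ := hgmem
    have hgpt : ∀ α : K, |(evalHom K b) α - f α| < δ := by
      intro α
      have := (ContinuousMap.norm_lt_iff _ hδpos).mp hg α
      simpa using this
    -- key estimate: |α(a + b²)| ≤ M + ε for α ∈ K
    have hkey : ∀ α ∈ K, |α (a + b ^ 2)| ≤ M + ε := by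
      intro α hα
      set αK : K := ⟨α, hα⟩
      have hb : |α b - f αK| < δ := hgpt αK
      have hfval : f αK = Real.sqrt (max 0 (-(α a))) := rfl
      have hfC : |f αK| ≤ C := by
        have := f.norm_coe_le_norm αK
        simpa using this
      have hfnn : 0 ≤ f αK := by rw [hfval]; exact Real.sqrt_nonneg _
      have hsq : f αK ^ 2 = max 0 (-(α a)) := by
        rw [hfval, Real.sq_sqrt (le_max_left _ _)]
      have herr : |(α b) ^ 2 - f αK ^ 2| ≤ δ * (δ + 2 * C) := by
        have : (α b) ^ 2 - f αK ^ 2 = (α b - f αK) * (α b - f αK + 2 * f αK) := by ring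
        rw [this, abs_mul]
        have h1 : |α b - f αK| ≤ δ := le_of_lt hb
        have h2 : |α b - f αK + 2 * f αK| ≤ δ + 2 * C := by
          calc |α b - f αK + 2 * f αK| ≤ |α b - f αK| + |2 * f αK| := abs_add_le _ _
            _ ≤ δ + 2 * C := by rw [abs_mul]; simp only [abs_two]; nlinarith [abs_nonneg (α b - f αK)]
        exact mul_le_mul h1 h2 (abs_nonneg _) hδpos.le
      have herr' : δ * (δ + 2 * C) ≤ ε := by
        have h1 : δ ≤ 1 := min_le_left _ _
        have h2 : δ ≤ ε / (1 + 2 * C) := min_le_right _ _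
        have : δ * (1 + 2 * C) ≤ ε := by
          rw [← div_mul_cancel₀ ε (show (1 + 2 * C) ≠ 0 by positivity)]
          exact mul_le_mul_of_nonneg_right h2 (by positivity)
        nlinarith
      -- α (a + b²) = α a + (α b)² = max 0 (α a) + error
      have heq : α (a + b ^ 2) = max 0 (α a) + ((α b) ^ 2 - f αK ^ 2) := by
        rw [map_add, map_pow, hsq]
        rcases le_total (α a) 0 with h | h
        · rw [max_eq_left h, max_eq_right (by linarith)]; ring
        · rw [max_eq_right h, max_eq_left (by linarith)]; ring
      have hmax : max 0 (α a) ≤ M := le_csSup hbddM ⟨α, hα, rfl⟩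
      calc |α (a + b ^ 2)| ≤ max 0 (α a) + |(α b) ^ 2 - f αK ^ 2| := by
            rw [heq]
            exact le_trans (abs_add_le _ _) (by simp [abs_of_nonneg (le_max_left 0 (α a))])
        _ ≤ M + ε := add_le_add hmax (le_trans herr herr')
    -- conclude
    have hmem : (b ^ 2 : A) ∈ AddSubmonoid.closure {x : A | ∃ b : A, x = b ^ 2} :=
      AddSubmonoid.subset_closure ⟨b, rfl⟩
    calc sInf _ ≤ sSup ((fun α : A →ₐ[ℝ] ℝ => |α (a + b ^ 2)|) '' K) :=
          csInf_le hSbdd ⟨b ^ 2, hmem, rfl⟩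
      _ ≤ M + ε := csSup_le (hKne.image _) (by rintro y ⟨α, hα, rfl⟩; exact hkey α hα)
  · exact le_csInf hSne hgeM
end

section
/- Let A be a commutative unital ℝ-algebra, K ⊆ X(A) compact (in the weak topology on the character space), and B ⊆ A a linear subspace such that there exists q ∈ B with α(q) > 0 for all α ∈ K. Then every linear functional L: B → ℝ satisfying L(b) ≥ 0 for all b ∈ B with α(b) ≥ 0 for all α ∈ K admits a positive Radon measure μ supported in K with L(b) = ∫_K b̂ dμ for all b ∈ B. -/
open MeasureTheory

variable {A : Type*} [CommRing A] [Algebra ℝ A]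

/-- The Borel σ-algebra on the character space. -/
noncomputable instance charSpaceMeasurable : MeasurableSpace (A →ₐ[ℝ] ℝ) :=
  borel _



open MeasureTheory TopologicalSpace Set
open scoped NNReal ENNReal
set_option linter.unusedSectionVars false

section CompactRMK

variable {X : Type*} [TopologicalSpace X] [CompactSpace X] [T2Space X]
variable (Λ : C(X, ℝ) →ₗ[ℝ] ℝ)

/-- Test functions for a set: nonneg continuous functions that are `≥ 1` on the set. -/
def rtest (C : Set X) : Set ℝ :=
  {r | ∃ f : C(X, ℝ), (∀ x, 0 ≤ f x) ∧ (∀ x ∈ C, 1 ≤ f x) ∧ Λ f = r}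

noncomputable def rlam (C : Set X) : ℝ := sInf (rtest Λ C)

variable {Λ}

lemma rtest_nonempty (C : Set X) : (rtest Λ C).Nonempty :=
  ⟨Λ 1, 1, fun _ => zero_le_one, fun _ _ => le_refl _, rfl⟩

variable (hΛ : ∀ f : C(X, ℝ), (∀ x, 0 ≤ f x) → 0 ≤ Λ f)
include hΛ

lemma lmono {f g : C(X, ℝ)} (h : ∀ x, f x ≤ g x) : Λ f ≤ Λ g := by
  have := hΛ (g - f) (fun x => by simpa using h x)
  simp only [map_sub] at this
  linarith

lemma rtest_bddBelow (C : Set X) : BddBelow (rtest Λ C) := by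
  refine ⟨0, ?_⟩
  rintro r ⟨f, hf0, _, rfl⟩
  exact hΛ f hf0

lemma rlam_nonneg (C : Set X) : 0 ≤ rlam Λ C :=
  le_csInf (rtest_nonempty C) (by rintro r ⟨f, hf0, _, rfl⟩; exact hΛ f hf0)

lemma rlam_le {C : Set X} {f : C(X, ℝ)} (hf0 : ∀ x, 0 ≤ f x) (hf1 : ∀ x ∈ C, 1 ≤ f x) :
    rlam Λ C ≤ Λ f :=
  csInf_le (rtest_bddBelow hΛ C) ⟨f, hf0, hf1, rfl⟩

lemma le_rlam {C : Set X} {r : ℝ}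
    (h : ∀ f : C(X, ℝ), (∀ x, 0 ≤ f x) → (∀ x ∈ C, 1 ≤ f x) → r ≤ Λ f) :
    r ≤ rlam Λ C :=
  le_csInf (rtest_nonempty C) (by rintro s ⟨f, hf0, hf1, rfl⟩; exact h f hf0 hf1)

lemma rlam_mono {C D : Set X} (h : C ⊆ D) : rlam Λ C ≤ rlam Λ D :=
  csInf_le_csInf (rtest_bddBelow hΛ C) (rtest_nonempty D)
    (by rintro r ⟨f, hf0, hf1, rfl⟩; exact ⟨f, hf0, fun x hx => hf1 x (h hx), rfl⟩)

lemma exists_rtest_lt {C : Set X} {ε : ℝ} (hε : 0 < ε) :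
    ∃ f : C(X, ℝ), (∀ x, 0 ≤ f x) ∧ (∀ x ∈ C, 1 ≤ f x) ∧ Λ f < rlam Λ C + ε := by
  obtain ⟨r, hr, hlt⟩ := exists_lt_of_csInf_lt (rtest_nonempty C)
    (lt_add_of_pos_right (rlam Λ C) hε)
  obtain ⟨f, hf0, hf1, rfl⟩ := hr
  exact ⟨f, hf0, hf1, hlt⟩

lemma rlam_sup_le (C D : Set X) : rlam Λ (C ∪ D) ≤ rlam Λ C + rlam Λ D := by
  refine le_of_forall_pos_le_add fun ε hε => ?_
  obtain ⟨f, hf0, hf1, hfl⟩ := exists_rtest_lt hΛ (C := C) (half_pos hε)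
  obtain ⟨g, hg0, hg1, hgl⟩ := exists_rtest_lt hΛ (C := D) (half_pos hε)
  have : rlam Λ (C ∪ D) ≤ Λ (f + g) := by
    refine rlam_le hΛ (fun x => by have := hf0 x; have := hg0 x; simp; linarith) ?_
    rintro x (hx | hx)
    · have := hg0 x; have := hf1 x hx; simp; linarith
    · have := hf0 x; have := hg1 x hx; simp; linarith
  rw [map_add] at this
  linarith

end CompactRMK

section Part2
variable {X : Type*} [TopologicalSpace X] [CompactSpace X] [T2Space X]
variable {Λ : C(X, ℝ) →ₗ[ℝ] ℝ}
variable (hΛ : ∀ f : C(X, ℝ), (∀ x, 0 ≤ f x) → 0 ≤ Λ f)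
include hΛ

lemma le_rlam_union {C D : Set X} (hC : IsClosed C) (hD : IsClosed D) (hCD : Disjoint C D) :
    rlam Λ C + rlam Λ D ≤ rlam Λ (C ∪ D) := by
  obtain ⟨g, hg0, hg1, hg01⟩ := exists_continuous_zero_one_of_isClosed hC hD hCD
  refine le_rlam hΛ fun f hf0 hf1 => ?_
  have key : Λ (f * (1 - g)) + Λ (f * g) = Λ f := by
    rw [← map_add]; congr 1; ext x; simp; ring
  have h1 : rlam Λ C ≤ Λ (f * (1 - g)) := by
    refine rlam_le hΛ (fun x => ?_) (fun x hx => ?_)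
    · have := (hg01 x).1; have := (hg01 x).2; have := hf0 x
      simp only [ContinuousMap.mul_apply, ContinuousMap.sub_apply, ContinuousMap.one_apply]
      nlinarith
    · have hgx : g x = 0 := hg0 hx
      have := hf1 x (Or.inl hx)
      simp only [ContinuousMap.mul_apply, ContinuousMap.sub_apply, ContinuousMap.one_apply, hgx]
      linarith
  have h2 : rlam Λ D ≤ Λ (f * g) := by
    refine rlam_le hΛ (fun x => ?_) (fun x hx => ?_)
    · have := (hg01 x).1; have := hf0 x
      simp only [ContinuousMap.mul_apply]; nlinarith
    · have hgx : g x = 1 := hg1 hx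
      have := hf1 x (Or.inr hx)
      simp only [ContinuousMap.mul_apply, hgx]
      linarith
  linarith

lemma rlam_exists_compact_nbhd {C : Set X} (hC : IsCompact C) {ε : ℝ} (hε : 0 < ε) :
    ∃ C' : Set X, IsCompact C' ∧ C ⊆ interior C' ∧ rlam Λ C' ≤ rlam Λ C + ε := by
  obtain ⟨f, hf0, hf1, hfl⟩ := exists_rtest_lt (Λ := Λ) (C := C) hΛ (half_pos hε)
  set t := Λ f with ht
  have ht0 : 0 ≤ t := hΛ f hf0
  set s := t + ε / 2 with hs
  have hs0 : 0 < s := by positivity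
  set β := max (t / s) (1 / 2) with hβ
  clear_value t s β
  have hβ0 : 0 < β := by rw [hβ]; exact lt_max_of_lt_right one_half_pos
  have hβ1 : β < 1 := by
    rw [hβ]
    apply max_lt _ (by norm_num)
    rw [div_lt_one hs0]; linarith
  refine ⟨{x | β ≤ f x}, ?_, ?_, ?_⟩
  · exact (isClosed_le continuous_const (map_continuous f)).isCompact
  · intro x hx
    have : x ∈ {y | β < f y} := lt_of_lt_of_le hβ1 (hf1 x hx)
    exact mem_interior.2 ⟨{y | β < f y}, fun y (hy : β < f y) => le_of_lt hy,
      isOpen_lt continuous_const (map_continuous f), this⟩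
  · have h1 : rlam Λ {x | β ≤ f x} ≤ Λ (β⁻¹ • f) := by
      refine rlam_le hΛ (fun x => by simp only [ContinuousMap.smul_apply, smul_eq_mul]; have := hf0 x; have h0 := hβ0; positivity) (fun x hx => ?_)
      have : β ≤ f x := hx
      rw [ContinuousMap.smul_apply, smul_eq_mul, ← inv_mul_cancel₀ (ne_of_gt hβ0)]
      exact mul_le_mul_of_nonneg_left this (by positivity)
    rw [_root_.map_smul, smul_eq_mul] at h1
    refine h1.trans ?_
    have hkey : β⁻¹ * t ≤ s := by
      rcases le_or_gt (t / s) (1/2) with hc | hc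
      · have hβv : β = 1/2 := by rw [hβ]; exact max_eq_right hc
        have : t ≤ s / 2 := by
          rw [div_le_iff₀ hs0] at hc; linarith
        rw [hβv]; norm_num; linarith
      · have hβv : β = t / s := by rw [hβ]; exact max_eq_left hc.le
        have ht0' : 0 < t := by
          have h := lt_trans one_half_pos hc
          rcases div_pos_iff.mp h with ⟨h1, _⟩ | ⟨_, h2⟩
          · exact h1
          · linarith
        rw [hβv, inv_div, div_mul_cancel₀ s (ne_of_gt ht0')]
    have hsle : s ≤ rlam Λ C + ε := by rw [hs]; linarith
    rw [← ht]
    linarith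

/-- The Riesz content associated to a positive functional on a compact Hausdorff space. -/
noncomputable def rlamContent : Content X where
  toFun C := ⟨rlam Λ C, rlam_nonneg hΛ C⟩
  mono' C₁ C₂ h := by exact_mod_cast rlam_mono hΛ h
  sup_disjoint' C₁ C₂ h h₁ h₂ := by
    have hle := rlam_sup_le hΛ (C₁ : Set X) C₂
    have hge := le_rlam_union hΛ h₁ h₂ h
    have : rlam Λ ((C₁ : Set X) ∪ C₂) = rlam Λ C₁ + rlam Λ C₂ := le_antisymm hle hge
    ext
    exact this
  sup_le' C₁ C₂ := by exact_mod_cast rlam_sup_le hΛ (C₁ : Set X) C₂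

lemma rlamContent_regular : Content.ContentRegular (rlamContent hΛ) := by
  intro C
  refine le_antisymm
    (le_iInf₂ fun C' hC' => (rlamContent hΛ).mono _ _ (hC'.trans interior_subset))
    (ENNReal.le_of_forall_pos_le_add fun ε' hε' _ => ?_)
  have hεR : (0 : ℝ) < (ε' : ℝ) := by exact_mod_cast hε'
  obtain ⟨C', hC'c, hC'i, hC'l⟩ := rlam_exists_compact_nbhd hΛ C.isCompact hεR
  have hkey : (rlamContent hΛ).toFun ⟨C', hC'c⟩ ≤ (rlamContent hΛ).toFun C + ε' := by
    have h' : rlam Λ C' ≤ rlam Λ ↑C + (ε' : ℝ) := hC'l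
    exact_mod_cast h'
  refine iInf₂_le_of_le ⟨C', hC'c⟩ hC'i ?_
  show ((rlamContent hΛ).toFun ⟨C', hC'c⟩ : ℝ≥0∞) ≤ ((rlamContent hΛ).toFun C : ℝ≥0∞) + ε'
  exact_mod_cast hkey
end Part2

section Part3
variable {X : Type*} [TopologicalSpace X] [CompactSpace X] [T2Space X]
  [MeasurableSpace X] [BorelSpace X]
variable {Λ : C(X, ℝ) →ₗ[ℝ] ℝ}
variable (hΛ : ∀ f : C(X, ℝ), (∀ x, 0 ≤ f x) → 0 ≤ Λ f)

/-- The measure induced by the Riesz content of a positive functional. -/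
noncomputable def rlamMeasure : Measure X := (rlamContent hΛ).measure

instance : (rlamMeasure hΛ).Regular := Content.regular _

lemma rlamMeasure_compact {C : Set X} (hC : IsCompact C) :
    rlamMeasure hΛ C = ENNReal.ofReal (rlam Λ C) := by
  have h := Content.measure_eq_content_of_regular (rlamContent hΛ)
    (rlamContent_regular hΛ) ⟨C, hC⟩
  simp only [Compacts.coe_mk] at h
  rw [show rlamMeasure hΛ C = (rlamContent hΛ).measure C from rfl, h]
  rw [ENNReal.ofReal]
  congr 1
  show (((rlamContent hΛ).toFun ⟨C, hC⟩ : ℝ≥0) : ℝ≥0∞) = _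
  rw [ENNReal.coe_inj]
  ext
  show rlam Λ C = _
  exact (Real.coe_toNNReal _ (rlam_nonneg hΛ C)).symm

lemma rlamMeasure_compact_toReal {C : Set X} (hC : IsCompact C) :
    (rlamMeasure hΛ C).toReal = rlam Λ C := by
  rw [rlamMeasure_compact hΛ hC]
  exact ENNReal.toReal_ofReal (rlam_nonneg hΛ C)

lemma rlamMeasure_ne_top {C : Set X} (hC : IsCompact C) : rlamMeasure hΛ C ≠ ⊤ := by
  rw [rlamMeasure_compact hΛ hC]; exact ENNReal.ofReal_ne_top

instance : IsFiniteMeasure (rlamMeasure hΛ) :=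
  ⟨lt_top_iff_ne_top.2 (rlamMeasure_ne_top hΛ isCompact_univ)⟩

/-- Real telescoping identity for truncation functions. -/
lemma min_max_telescope (y c : ℝ) (hc : 0 ≤ c) :
    min 1 (max 0 (y - c)) = min y (c + 1) - min y c := by
  rcases le_total y c with h | h
  · rw [min_eq_left (h.trans (by linarith)), min_eq_left h]
    rw [max_eq_left (by linarith), min_eq_right zero_le_one]
    ring
  · rcases le_total y (c + 1) with h' | h'
    · rw [min_eq_left h', min_eq_right h, max_eq_right (by linarith),
        min_eq_right (by linarith)]
    · rw [min_eq_right h', min_eq_right h, max_eq_right (by linarith),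
        min_eq_left (by linarith)]
      ring

include hΛ in
lemma rlam_univ : rlam Λ (univ : Set X) = Λ 1 := by
  refine le_antisymm (rlam_le hΛ (fun _ => zero_le_one) (fun _ _ => le_refl _)) ?_
  exact le_rlam hΛ fun f hf0 hf1 => lmono hΛ (fun x => hf1 x (mem_univ x))

end Part3

section Part4
variable {X : Type*} [TopologicalSpace X] [CompactSpace X] [T2Space X]
  [MeasurableSpace X] [BorelSpace X]
variable {Λ : C(X, ℝ) →ₗ[ℝ] ℝ}
variable (hΛ : ∀ f : C(X, ℝ), (∀ x, 0 ≤ f x) → 0 ≤ Λ f)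
include hΛ

lemma integral_rlamMeasure01 (f : C(X, ℝ)) (hf0 : ∀ x, 0 ≤ f x) (hf1 : ∀ x, f x ≤ 1) :
    ∫ x, f x ∂(rlamMeasure hΛ) = Λ f := by
  set μ := rlamMeasure hΛ with hμ
  have hfint : Integrable (fun x => f x) μ :=
    ⟨(map_continuous f).aestronglyMeasurable,
      HasFiniteIntegral.of_bounded (C := 1) (Filter.Eventually.of_forall fun x => by
        rw [Real.norm_eq_abs, abs_of_nonneg (hf0 x)]; exact hf1 x)⟩
  have key : ∀ n : ℕ, 0 < n → |(∫ x, f x ∂μ) - Λ f| ≤ rlam Λ (univ : Set X) / n := by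
    intro n hn
    have hn' : (0 : ℝ) < n := by exact_mod_cast hn
    set F : ℕ → Set X := fun i => {x | (i : ℝ) / n ≤ f x} with hF
    have hFclosed : ∀ i, IsClosed (F i) :=
      fun i => isClosed_le continuous_const (map_continuous f)
    have hFcompact : ∀ i, IsCompact (F i) := fun i => (hFclosed i).isCompact
    have hFmeas : ∀ i, MeasurableSet (F i) := fun i => (hFclosed i).measurableSet
    set g : ℕ → C(X, ℝ) :=
      fun i => 1 ⊓ (0 ⊔ ((n : ℝ) • f - ContinuousMap.const X (i : ℝ))) with hg
    have hgval : ∀ i x, g i x = min 1 (max 0 ((n : ℝ) * f x - i)) := by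
      intro i x
      simp [hg, min_def, max_def]
    have hg0 : ∀ i x, 0 ≤ g i x := fun i x => by
      rw [hgval]; exact le_min zero_le_one (le_max_left _ _)
    have hg1 : ∀ i x, g i x ≤ 1 := fun i x => by rw [hgval]; exact min_le_left _ _
    have hgF1 : ∀ i, ∀ x ∈ F (i + 1), g i x = 1 := by
      intro i x hx
      have hx' : ((i : ℝ) + 1) / n ≤ f x := by
        have : ((i + 1 : ℕ) : ℝ) / n ≤ f x := hx
        push_cast at this; exact this
      have h1 : (1 : ℝ) ≤ (n : ℝ) * f x - i := by
        rw [div_le_iff₀ hn'] at hx'; nlinarith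
      rw [hgval, max_eq_right (by linarith), min_eq_left h1]
    have hgF0 : ∀ i, ∀ x ∉ F i, g i x = 0 := by
      intro i x hx
      have hx' : f x < (i : ℝ) / n := lt_of_not_ge hx
      rw [lt_div_iff₀ hn'] at hx'
      rw [hgval, max_eq_left (by nlinarith), min_eq_right zero_le_one]
    have hsum : ∀ x, ∑ i ∈ Finset.range n, g i x = n * f x := by
      intro x
      have tele := Finset.sum_range_sub (fun i : ℕ => min ((n : ℝ) * f x) (i : ℝ)) n
      calc ∑ i ∈ Finset.range n, g i x
          = ∑ i ∈ Finset.range n,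
            (min ((n : ℝ) * f x) ((i + 1 : ℕ) : ℝ) - min ((n : ℝ) * f x) (i : ℝ)) := by
            refine Finset.sum_congr rfl fun i _ => ?_
            rw [hgval]
            push_cast
            exact min_max_telescope _ _ (Nat.cast_nonneg i)
        _ = min ((n : ℝ) * f x) (n : ℝ) - min ((n : ℝ) * f x) ((0 : ℕ) : ℝ) := tele
        _ = n * f x := by
            rw [Nat.cast_zero, min_eq_left (by nlinarith [hf1 x]),
              min_eq_right (by nlinarith [hf0 x])]
            ring
    have hgsum : ∑ i ∈ Finset.range n, g i = (n : ℝ) • f := by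
      ext x
      rw [ContinuousMap.smul_apply, smul_eq_mul, ← hsum x]
      simp
    have hΛsum : ∑ i ∈ Finset.range n, Λ (g i) = n * Λ f := by
      rw [← map_sum, hgsum, _root_.map_smul, smul_eq_mul]
    have hlow : ∀ i, rlam Λ (F (i + 1)) ≤ Λ (g i) := fun i =>
      rlam_le hΛ (hg0 i) (fun x hx => le_of_eq (hgF1 i x hx).symm)
    have hhigh : ∀ i, Λ (g i) ≤ rlam Λ (F i) := fun i =>
      le_rlam hΛ fun h h0 h1 => lmono hΛ fun x => by
        by_cases hx : x ∈ F i
        · exact (hg1 i x).trans (h1 x hx)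
        · rw [hgF0 i x hx]; exact h0 x
    -- integral comparison
    set S : ℕ → ℝ := fun i => rlam Λ (F i) with hS
    have hμF : ∀ i, (μ (F i)).toReal = S i := fun i =>
      rlamMeasure_compact_toReal hΛ (hFcompact i)
    set ind : ℕ → X → ℝ := fun i => (F i).indicator (fun _ => (1 : ℝ)) with hind
    have hindint : ∀ i, Integrable (ind i) μ :=
      fun i => (integrable_const (1 : ℝ)).indicator (hFmeas i)
    have hindint' : ∀ i, ∫ x, ind i x ∂μ = S i := by
      intro i
      simp only [hind]
      rw [integral_indicator_const (1 : ℝ) (hFmeas i), smul_eq_mul, mul_one, measureReal_def, hμF]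
    have hindle : ∀ i x, ind (i + 1) x ≤ g i x := by
      intro i x
      by_cases hx : x ∈ F (i + 1)
      · simp only [hind]; rw [indicator_of_mem hx, hgF1 i x hx]
      · simp only [hind]; rw [indicator_of_notMem hx]; exact hg0 i x
    have hgle : ∀ i x, g i x ≤ ind i x := by
      intro i x
      by_cases hx : x ∈ F i
      · simp only [hind]; rw [indicator_of_mem hx]; exact hg1 i x
      · simp only [hind]; rw [indicator_of_notMem hx, hgF0 i x hx]
    have hintlow : ∑ i ∈ Finset.range n, S (i + 1) ≤ n * ∫ x, f x ∂μ := by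
      have h1 : ∫ x, (∑ i ∈ Finset.range n, ind (i + 1) x) ∂μ
          = ∑ i ∈ Finset.range n, S (i + 1) := by
        rw [integral_finset_sum _ (fun i _ => hindint (i + 1))]
        exact Finset.sum_congr rfl fun i _ => hindint' (i + 1)
      rw [← h1, ← integral_const_mul]
      refine integral_mono (integrable_finset_sum _ (fun i _ => hindint (i + 1)))
        (hfint.const_mul _) fun x => ?_
      rw [← hsum x]
      exact Finset.sum_le_sum fun i _ => hindle i x
    have hinthigh : n * ∫ x, f x ∂μ ≤ ∑ i ∈ Finset.range n, S i := by
      have h1 : ∫ x, (∑ i ∈ Finset.range n, ind i x) ∂μ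
          = ∑ i ∈ Finset.range n, S i := by
        rw [integral_finset_sum _ (fun i _ => hindint i)]
        exact Finset.sum_congr rfl fun i _ => hindint' i
      rw [← h1, ← integral_const_mul]
      refine integral_mono (hfint.const_mul _)
        (integrable_finset_sum _ (fun i _ => hindint i)) fun x => ?_
      rw [← hsum x]
      exact Finset.sum_le_sum fun i _ => hgle i x
    have hΛlow : ∑ i ∈ Finset.range n, S (i + 1) ≤ n * Λ f := by
      rw [← hΛsum]
      exact Finset.sum_le_sum fun i _ => hlow i
    have hΛhigh : n * Λ f ≤ ∑ i ∈ Finset.range n, S i := by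
      rw [← hΛsum]
      exact Finset.sum_le_sum fun i _ => hhigh i
    have hdiff : (∑ i ∈ Finset.range n, S i) - (∑ i ∈ Finset.range n, S (i + 1))
        ≤ rlam Λ (univ : Set X) := by
      have tele := Finset.sum_range_sub S n
      have hS0 : S 0 = rlam Λ (univ : Set X) := by
        have hF0 : F 0 = (univ : Set X) := by
          ext x
          simp only [hF, Nat.cast_zero, zero_div, mem_setOf_eq, mem_univ, iff_true]
          exact hf0 x
        simp only [hS, hF0]
      have hSn : 0 ≤ S n := rlam_nonneg hΛ _
      have : ∑ i ∈ Finset.range n, (S (i + 1) - S i) = S n - S 0 := tele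
      have h2 : ∑ i ∈ Finset.range n, S (i + 1) - ∑ i ∈ Finset.range n, S i
          = S n - S 0 := by rw [← this, Finset.sum_sub_distrib]
      linarith
    have h1 : (n : ℝ) * ((∫ x, f x ∂μ) - Λ f) ≤ rlam Λ (univ : Set X) := by
      rw [mul_sub]; linarith
    have h2 : (n : ℝ) * (Λ f - ∫ x, f x ∂μ) ≤ rlam Λ (univ : Set X) := by
      rw [mul_sub]; linarith
    rw [abs_sub_le_iff]
    constructor <;> rw [le_div_iff₀ hn'] <;> rw [mul_comm]
    · exact h1
    · exact h2
  have hlim : Filter.Tendsto (fun n : ℕ => rlam Λ (univ : Set X) / n)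
      Filter.atTop (nhds 0) := tendsto_const_div_atTop_nhds_zero_nat _
  have habs0 : |(∫ x, f x ∂μ) - Λ f| ≤ 0 :=
    ge_of_tendsto hlim (Filter.eventually_atTop.2 ⟨1, fun n hn => key n hn⟩)
  have h3 : (∫ x, f x ∂μ) - Λ f = 0 :=
    abs_eq_zero.1 (le_antisymm habs0 (abs_nonneg _))
  linarith

lemma contmap_integrable (f : C(X, ℝ)) : Integrable (fun x => f x) (rlamMeasure hΛ) :=
  ⟨(map_continuous f).aestronglyMeasurable,
    HasFiniteIntegral.of_bounded (C := ‖f‖)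
      (Filter.Eventually.of_forall fun x => f.norm_coe_le_norm x)⟩

lemma integral_rlamMeasure (f : C(X, ℝ)) :
    ∫ x, f x ∂(rlamMeasure hΛ) = Λ f := by
  set μ := rlamMeasure hΛ with hμ
  set M : ℝ := ‖f‖ + 1 with hM
  have hM0 : 0 < M := by positivity
  set g : C(X, ℝ) := (2 * M)⁻¹ • (f + ContinuousMap.const X M) with hg
  have hgval : ∀ x, g x = (2 * M)⁻¹ * (f x + M) := fun x => by simp [hg]; ring
  have hfb : ∀ x, |f x| ≤ ‖f‖ := fun x => by
    rw [← Real.norm_eq_abs]; exact f.norm_coe_le_norm x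
  have hg0 : ∀ x, 0 ≤ g x := fun x => by
    rw [hgval]
    have := (abs_le.1 (hfb x)).1
    have h2M : (0:ℝ) < (2 * M)⁻¹ := by positivity
    nlinarith
  have hg1 : ∀ x, g x ≤ 1 := fun x => by
    rw [hgval]
    have := (abs_le.1 (hfb x)).2
    rw [inv_mul_le_iff₀ (by positivity)]
    linarith
  have hgint := integral_rlamMeasure01 hΛ g hg0 hg1
  have hfg : f = (2 * M) • g - ContinuousMap.const X M := by
    ext x
    rw [ContinuousMap.sub_apply, ContinuousMap.smul_apply, hgval, smul_eq_mul,
      ContinuousMap.const_apply]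
    field_simp
    ring
  have hμuniv : (μ univ).toReal = Λ 1 := by
    rw [show μ = rlamMeasure hΛ from rfl, rlamMeasure_compact_toReal hΛ isCompact_univ,
      rlam_univ hΛ]
  have hΛconst : Λ (ContinuousMap.const X M) = M * Λ 1 := by
    have : ContinuousMap.const X M = M • (1 : C(X, ℝ)) := by ext x; simp
    rw [this, _root_.map_smul, smul_eq_mul]
  have hintconst : ∫ x, (ContinuousMap.const X M) x ∂μ = M * Λ 1 := by
    simp only [ContinuousMap.const_apply]
    rw [integral_const, smul_eq_mul, measureReal_def, hμuniv, mul_comm]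
  calc ∫ x, f x ∂μ
      = ∫ x, ((2 * M) * g x - (ContinuousMap.const X M) x) ∂μ := by
        congr 1; ext x
        rw [hfg]
        simp
      _ = (2 * M) * ∫ x, g x ∂μ - ∫ x, (ContinuousMap.const X M) x ∂μ := by
        rw [integral_sub (((contmap_integrable hΛ g).const_mul _)) (contmap_integrable hΛ _),
          integral_const_mul]
      _ = (2 * M) * Λ g - M * Λ 1 := by rw [hgint, hintconst]
      _ = Λ f := by
        conv_rhs => rw [hfg, map_sub, _root_.map_smul, smul_eq_mul, hΛconst]

end Part4

section CharSpace

lemma charSpace_embedding :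
    Topology.IsEmbedding (fun α : A →ₐ[ℝ] ℝ => (α : A → ℝ)) :=
  ⟨⟨rfl⟩, fun _ _ h => DFunLike.coe_injective h⟩

instance charSpaceT2 : T2Space (A →ₐ[ℝ] ℝ) := charSpace_embedding.t2Space

instance charSpaceBorel : BorelSpace (A →ₐ[ℝ] ℝ) := ⟨rfl⟩

lemma charSpace_continuous_eval (a : A) :
    Continuous fun α : A →ₐ[ℝ] ℝ => α a :=
  (continuous_apply a).comp charSpace_embedding.continuous

/-- The Gelfand transform restricted to a subspace `B`, with values in continuous
functions on `K`. -/
noncomputable def hatMap (K : Set (A →ₐ[ℝ] ℝ)) (B : Submodule ℝ A) :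
    B →ₗ[ℝ] C(K, ℝ) where
  toFun b := ⟨fun α => (α : A →ₐ[ℝ] ℝ) (b : A),
    (charSpace_continuous_eval (b : A)).comp continuous_subtype_val⟩
  map_add' b₁ b₂ := by ext α; simp
  map_smul' c b := by ext α; simp

end CharSpace

section Extension

lemma exists_positive_extension (K : Set (A →ₐ[ℝ] ℝ)) (hK : IsCompact K)
    (B : Submodule ℝ A) (q : A) (hq : q ∈ B) (hqpos : ∀ α ∈ K, 0 < α q)
    (L : B →ₗ[ℝ] ℝ)
    (hL : ∀ b : B, (∀ α ∈ K, 0 ≤ α (b : A)) → 0 ≤ L b) :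
    ∃ Λ : C(K, ℝ) →ₗ[ℝ] ℝ, (∀ f : C(K, ℝ), (∀ x, 0 ≤ f x) → 0 ≤ Λ f) ∧
      ∀ b : B, Λ (hatMap K B b) = L b := by
  haveI : CompactSpace K := isCompact_iff_compactSpace.mp hK
  have hmono : ∀ b b' : B, (∀ x : K, (x : A →ₐ[ℝ] ℝ) (b : A) ≤ (x : A →ₐ[ℝ] ℝ) (b' : A)) →
      L b ≤ L b' := by
    intro b b' h
    have h0 : 0 ≤ L (b' - b) := hL _ (fun α hα => by
      have := h ⟨α, hα⟩
      simp only [Submodule.coe_sub, map_sub]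
      linarith)
    rw [map_sub] at h0; linarith
  rcases eq_empty_or_nonempty K with hKe | hKne
  · refine ⟨0, fun f _ => le_refl _, fun b => ?_⟩
    have h1 : 0 ≤ L b := hL b (fun α hα => absurd hα (by rw [hKe]; exact notMem_empty α))
    have h2 : 0 ≤ L (-b) := hL (-b) (fun α hα => absurd hα (by rw [hKe]; exact notMem_empty α))
    rw [map_neg] at h2
    simp only [LinearMap.zero_apply]
    linarith
  · haveI : Nonempty K := hKne.to_subtype
    obtain ⟨x₀, -, hx₀⟩ := (isCompact_univ (X := K)).exists_isMinOn univ_nonempty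
      ((charSpace_continuous_eval q).comp continuous_subtype_val).continuousOn
    set δ : ℝ := (x₀ : A →ₐ[ℝ] ℝ) q with hδ
    have hδpos : 0 < δ := hqpos _ x₀.2
    have hδle : ∀ x : K, δ ≤ (x : A →ₐ[ℝ] ℝ) q := fun x => isMinOn_iff.mp hx₀ x (mem_univ x)
    set Q : B := ⟨q, hq⟩ with hQ
    have hQval : ∀ (x : K) (c : ℝ),
        (x : A →ₐ[ℝ] ℝ) (((c • Q : B) : A)) = c * (x : A →ₐ[ℝ] ℝ) q := by
      intro x c
      rw [Submodule.coe_smul, _root_.map_smul, smul_eq_mul, hQ]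
    set Sset : C(K, ℝ) → Set ℝ := fun φ =>
      {r | ∃ b : B, (∀ x : K, φ x ≤ (x : A →ₐ[ℝ] ℝ) (b : A)) ∧ L b = r} with hSset
    have hadm : ∀ φ : C(K, ℝ), ∀ x : K, φ x ≤ (x : A →ₐ[ℝ] ℝ) (((‖φ‖ / δ) • Q : B) : A) := by
      intro φ x
      rw [hQval x _]
      have h1 : φ x ≤ ‖φ‖ := by
        have := φ.norm_coe_le_norm x
        rw [Real.norm_eq_abs] at this
        exact (le_abs_self _).trans this
      have h2 : ‖φ‖ / δ * δ ≤ ‖φ‖ / δ * ((x : A →ₐ[ℝ] ℝ) q) :=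
        mul_le_mul_of_nonneg_left (hδle x) (by positivity)
      rw [div_mul_cancel₀ _ hδpos.ne'] at h2
      linarith
    have hSne : ∀ φ : C(K, ℝ), (Sset φ).Nonempty :=
      fun φ => ⟨L ((‖φ‖ / δ) • Q), (‖φ‖ / δ) • Q, hadm φ, rfl⟩
    have hSbdd : ∀ φ : C(K, ℝ), BddBelow (Sset φ) := by
      intro φ
      refine ⟨-((‖φ‖ / δ) * L Q), ?_⟩
      rintro r ⟨b, hb, rfl⟩
      have h0 : 0 ≤ L (b + (‖φ‖ / δ) • Q) := by
        refine hL _ fun α hα => ?_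
        have h1 := hb ⟨α, hα⟩
        have h2 : -(‖φ‖) ≤ φ ⟨α, hα⟩ := by
          have := φ.norm_coe_le_norm ⟨α, hα⟩
          rw [Real.norm_eq_abs] at this
          linarith [(abs_le.1 this).1]
        have h3 : ‖φ‖ / δ * δ ≤ ‖φ‖ / δ * α q :=
          mul_le_mul_of_nonneg_left (hδle ⟨α, hα⟩) (by positivity)
        rw [div_mul_cancel₀ _ hδpos.ne'] at h3
        have h4 : ((b + (‖φ‖ / δ) • Q : B) : A) = (b : A) + ((((‖φ‖ / δ) • Q : B)) : A) :=
          Submodule.coe_add _ _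
        rw [h4, map_add, hQval ⟨α, hα⟩]
        linarith
      rw [map_add, _root_.map_smul, smul_eq_mul] at h0
      linarith
    set p : C(K, ℝ) → ℝ := fun φ => sInf (Sset φ) with hp
    have p_le : ∀ (φ : C(K, ℝ)) (b : B),
        (∀ x : K, φ x ≤ (x : A →ₐ[ℝ] ℝ) (b : A)) → p φ ≤ L b :=
      fun φ b h => csInf_le (hSbdd φ) ⟨b, h, rfl⟩
    have le_p : ∀ (φ : C(K, ℝ)) (r : ℝ),
        (∀ b : B, (∀ x : K, φ x ≤ (x : A →ₐ[ℝ] ℝ) (b : A)) → r ≤ L b) → r ≤ p φ :=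
      fun φ r h => le_csInf (hSne φ) (by rintro s ⟨b, hb, rfl⟩; exact h b hb)
    have p_exists_lt : ∀ (φ : C(K, ℝ)) {ε : ℝ}, 0 < ε →
        ∃ b : B, (∀ x : K, φ x ≤ (x : A →ₐ[ℝ] ℝ) (b : A)) ∧ L b < p φ + ε := by
      intro φ ε hε
      obtain ⟨r, hr, hlt⟩ := exists_lt_of_csInf_lt (hSne φ) (lt_add_of_pos_right (p φ) hε)
      obtain ⟨b, hb, rfl⟩ := hr
      exact ⟨b, hb, hlt⟩
    have N_add : ∀ φ ψ : C(K, ℝ), p (φ + ψ) ≤ p φ + p ψ := by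
      intro φ ψ
      refine le_of_forall_pos_le_add fun ε hε => ?_
      obtain ⟨b₁, hb₁, hl₁⟩ := p_exists_lt φ (half_pos hε)
      obtain ⟨b₂, hb₂, hl₂⟩ := p_exists_lt ψ (half_pos hε)
      have hadd : ∀ x : K, (φ + ψ) x ≤ (x : A →ₐ[ℝ] ℝ) ((b₁ + b₂ : B) : A) := by
        intro x
        rw [Submodule.coe_add, map_add, ContinuousMap.add_apply]
        exact add_le_add (hb₁ x) (hb₂ x)
      have := p_le (φ + ψ) (b₁ + b₂) hadd
      rw [map_add] at this
      linarith
    have N_hom : ∀ c : ℝ, 0 < c → ∀ φ : C(K, ℝ), p (c • φ) = c * p φ := by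
      intro c hc φ
      have le1 : p (c • φ) ≤ c * p φ := by
        refine (div_le_iff₀' hc).1 (le_p φ _ fun b hb => ?_)
        rw [div_le_iff₀' hc, ← smul_eq_mul, ← _root_.map_smul]
        refine p_le _ (c • b) fun x => ?_
        rw [Submodule.coe_smul, _root_.map_smul, smul_eq_mul, ContinuousMap.smul_apply, smul_eq_mul]
        exact mul_le_mul_of_nonneg_left (hb x) hc.le
      have le2 : c * p φ ≤ p (c • φ) := by
        refine le_p (c • φ) _ fun b hb => ?_
        have hb' : ∀ x : K, φ x ≤ (x : A →ₐ[ℝ] ℝ) ((c⁻¹ • b : B) : A) := by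
          intro x
          rw [Submodule.coe_smul, _root_.map_smul, smul_eq_mul]
          have := hb x
          rw [ContinuousMap.smul_apply, smul_eq_mul] at this
          rw [le_inv_mul_iff₀ hc]
          exact this
        have := p_le φ _ hb'
        rw [_root_.map_smul, smul_eq_mul] at this
        calc c * p φ ≤ c * (c⁻¹ * L b) := by
              exact mul_le_mul_of_nonneg_left this hc.le
          _ = L b := by field_simp
      exact le_antisymm le1 le2
    -- Hahn–Banach extension
    set hat : B →ₗ[ℝ] C(K, ℝ) := hatMap K B with hhat
    have hatval : ∀ (b : B) (x : K), (hat b) x = (x : A →ₐ[ℝ] ℝ) (b : A) := by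
      intro b x
      rw [hhat]
      rfl
    have hker : LinearMap.ker hat ≤ LinearMap.ker L := by
      intro b hb
      rw [LinearMap.mem_ker] at hb ⊢
      have hb' : ∀ x : K, (x : A →ₐ[ℝ] ℝ) (b : A) = 0 := by
        intro x
        rw [← hatval b x, hb]
        rfl
      have h1 : L b ≤ L 0 := hmono b 0 fun x => by
        rw [hb' x, Submodule.coe_zero, map_zero]
      have h2 : L 0 ≤ L b := hmono 0 b fun x => by
        rw [hb' x, Submodule.coe_zero, map_zero]
      rw [map_zero] at h1 h2
      linarith
    set L' : (LinearMap.range hat) →ₗ[ℝ] ℝ :=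
      (Submodule.liftQ (LinearMap.ker hat) L hker).comp
        (LinearMap.quotKerEquivRange hat).symm.toLinearMap with hL'
    have hL'b : ∀ b : B, L' ⟨hat b, LinearMap.mem_range_self hat b⟩ = L b := by
      intro b
      have h1 : (LinearMap.quotKerEquivRange hat) (Submodule.Quotient.mk b)
          = ⟨hat b, LinearMap.mem_range_self hat b⟩ :=
        Subtype.ext (LinearMap.quotKerEquivRange_apply_mk hat b)
      rw [hL', LinearMap.comp_apply, LinearEquiv.coe_toLinearMap, ← h1,
        LinearEquiv.symm_apply_apply, Submodule.liftQ_apply]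
    have hf : ∀ x : (⟨LinearMap.range hat, L'⟩ : (C(K, ℝ) →ₗ.[ℝ] ℝ)).domain,
        (⟨LinearMap.range hat, L'⟩ : (C(K, ℝ) →ₗ.[ℝ] ℝ)) x ≤ p x := by
      rintro ⟨φ, hφ⟩
      obtain ⟨b, rfl⟩ := hφ
      show L' ⟨hat b, LinearMap.mem_range_self hat b⟩ ≤ p (hat b)
      rw [hL'b b]
      exact le_p (hat b) _ fun b' hb' => hmono b b' fun x => by
        rw [← hatval b x]; exact hb' x
    obtain ⟨Λ, hΛeq, hΛle⟩ :=
      exists_extension_of_le_sublinear ⟨LinearMap.range hat, L'⟩ p N_hom N_add hf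
    refine ⟨Λ, ?_, ?_⟩
    · intro f hf0
      have h1 : Λ (-f) ≤ p (-f) := hΛle (-f)
      have h2 : p (-f) ≤ L 0 := p_le (-f) 0 fun x => by
        rw [Submodule.coe_zero, map_zero, ContinuousMap.neg_apply]
        linarith [hf0 x]
      rw [map_neg, map_zero] at *
      linarith
    · intro b
      have h1 := hΛeq ⟨hat b, LinearMap.mem_range_self hat b⟩
      have h2 : (⟨LinearMap.range hat, L'⟩ : (C(K, ℝ) →ₗ.[ℝ] ℝ))
          ⟨hat b, LinearMap.mem_range_self hat b⟩ = L b := hL'b b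
      rw [h2] at h1
      exact h1

end Extension


/-- compact case of the truncated moment problem: if `K ⊆ X(A)` is
compact, `B ⊆ A` is a subspace containing some `q` with `q̂ > 0` on `K`, then every
`K`-positive linear functional `L : B → ℝ` is represented by a positive Radon
measure supported in `K`. -/
theorem compact_truncated_moment_problem
    (K : Set (A →ₐ[ℝ] ℝ)) (hK : IsCompact K)
    (B : Submodule ℝ A) (q : A) (hq : q ∈ B) (hqpos : ∀ α ∈ K, 0 < α q)
    (L : B →ₗ[ℝ] ℝ)
    (hL : ∀ b : B, (∀ α ∈ K, 0 ≤ α (b : A)) → 0 ≤ L b) :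
    ∃ μ : Measure K, μ.Regular ∧
      ∀ b : B,
        Integrable (fun α : K => (α : A →ₐ[ℝ] ℝ) (b : A)) μ ∧
        L b = ∫ α : K, (α : A →ₐ[ℝ] ℝ) (b : A) ∂μ := by
  haveI : CompactSpace K := isCompact_iff_compactSpace.mp hK
  obtain ⟨Λ, hpos, hrep⟩ := exists_positive_extension K hK B q hq hqpos L hL
  refine ⟨rlamMeasure hpos, inferInstance, fun b => ?_⟩
  constructor
  · exact contmap_integrable hpos (hatMap K B b)
  · rw [← hrep b, ← integral_rlamMeasure hpos (hatMap K B b)]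
    rfl
end
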